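/- arXiv:2406.08664 — 8 statements merged into one kernel-verified Lean document; each statement's English description precedes it below -/
import Mathlib

section
/- For every n ≥ 1, the space ℝⁿ equipped with the ℓ∞ metric is hyperconvex: for every index set I, every family of points xᵢ ∈ ℝⁿ and radii rᵢ ≥ 0 (i ∈ I) satisfying d(xᵢ, xⱼ) ≤ rᵢ + rⱼ for all i, j ∈ I, the intersection ⋂_{i ∈ I} closedBall(xᵢ, rᵢ) is nonempty. -/
/-- For every `n ≥ 1`, `(ℝⁿ, ℓ∞)` is hyperconvex. -/
theorem stmt_1 (n : ℕ) (hn : 1 ≤ n) {I : Type*}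
    (x : I → PiLp ⊤ (fun _ : Fin n => ℝ)) (r : I → ℝ) (hr : ∀ i, 0 ≤ r i)
    (h : ∀ i j, dist (x i) (x j) ≤ r i + r j) :
    (⋂ i, Metric.closedBall (x i) (r i)).Nonempty := by
  rcases isEmpty_or_nonempty I with hI | hI
  · rw [Set.iInter_of_empty]
    exact Set.univ_nonempty
  · obtain ⟨i0⟩ := hI
    haveI : Nonempty I := ⟨i0⟩
    have hFin : Nonempty (Fin n) := ⟨⟨0, hn⟩⟩
    have key : ∀ i j (k : Fin n), x i k - x j k ≤ r i + r j := by
      intro i j k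
      have h1 : dist (x i k) (x j k) ≤ dist (x i) (x j) := by
        rw [PiLp.dist_eq_iSup]
        exact le_ciSup (f := fun k => dist (x i k) (x j k)) (Set.Finite.bddAbove (Set.finite_range _)) k
      calc x i k - x j k ≤ |x i k - x j k| := le_abs_self _
        _ = dist (x i k) (x j k) := (Real.dist_eq _ _).symm
        _ ≤ r i + r j := h1.trans (h i j)
    have hbdd : ∀ k : Fin n, BddAbove (Set.range fun i => x i k - r i) := by
      intro k
      refine ⟨x i0 k + r i0, ?_⟩
      rintro _ ⟨i, rfl⟩
      have h1 := key i i0 k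
      have h2 := hr i
      have h3 := hr i0
      simp only []
      linarith
    set y : PiLp ⊤ (fun _ : Fin n => ℝ) := WithLp.toLp ⊤ (fun k => ⨆ i, (x i k - r i)) with hy
    refine ⟨y, Set.mem_iInter.mpr fun i => ?_⟩
    rw [Metric.mem_closedBall, PiLp.dist_eq_iSup]
    refine ciSup_le fun k => ?_
    rw [Real.dist_eq, abs_sub_le_iff]
    constructor
    · have h1 : y k ≤ x i k + r i := by
        refine ciSup_le fun j => ?_
        have := key j i k
        linarith
      linarith
    · have h2 : x i k - r i ≤ y k := le_ciSup (hbdd k) i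
      linarith
end

section
/- For each n ≥ 1, there exists an isometric embedding of ℝⁿ equipped with the ℓ1 metric into ℝ^(2^(n−1)) equipped with the ℓ∞ metric. -/
/-- For each `n ≥ 1`, there exists an isometric embedding of `(ℝⁿ, ℓ1)` into
`(ℝ^(2^(n−1)), ℓ∞)`. -/
theorem stmt_7 (n : ℕ) (hn : 1 ≤ n) :
    ∃ f : PiLp 1 (fun _ : Fin n => ℝ) → PiLp ⊤ (fun _ : Fin (2 ^ (n - 1)) => ℝ),
      Isometry f := by
  have hcard : Fintype.card (Fin (n - 1) → Bool) = 2 ^ (n - 1) := by simp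
  let e : (Fin (n - 1) → Bool) ≃ Fin (2 ^ (n - 1)) := Fintype.equivFinOfCardEq hcard
  set s : Fin (2 ^ (n - 1)) → Fin n → ℝ := fun j i =>
    if h : i.val = 0 then 1
    else (if e.symm j ⟨i.val - 1, by omega⟩ then 1 else -1) with hs
  have hsabs : ∀ j i, |s j i| = 1 := by
    intro j i
    simp only [hs]
    split_ifs <;> norm_num
  have key : ∀ v : Fin n → ℝ, (⨆ j, |∑ i, s j i * v i|) = ∑ i, |v i| := by
    intro v
    apply le_antisymm
    · apply ciSup_le
      intro j
      calc |∑ i, s j i * v i| ≤ ∑ i, |s j i * v i| := Finset.abs_sum_le_sum_abs _ _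
        _ = ∑ i, |v i| := by simp [abs_mul, hsabs]
    · set b : Fin (n - 1) → Bool :=
        fun k => decide ((0 ≤ v ⟨0, by omega⟩) ↔ (0 ≤ v ⟨k.val + 1, by omega⟩)) with hb
      have hval : ∀ i : Fin n,
          s (e b) i * v i = if 0 ≤ v ⟨0, by omega⟩ then |v i| else -|v i| := by
        intro i
        simp only [hs, Equiv.symm_apply_apply]
        rcases Nat.eq_zero_or_pos i.val with hi0 | hpos
        · have hieq : i = ⟨0, by omega⟩ := Fin.ext hi0
          rw [dif_pos hi0, one_mul, ← hieq]
          split_ifs with h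
          · rw [abs_of_nonneg h]
          · rw [abs_of_neg (lt_of_not_ge h)]; ring
        · rw [dif_neg (by omega)]
          have hieq : (⟨(⟨i.val - 1, by omega⟩ : Fin (n - 1)).val + 1, by omega⟩ : Fin n) = i :=
            Fin.ext (by simp; omega)
          rw [hb]
          simp only [hieq]
          by_cases h0 : 0 ≤ v ⟨0, by omega⟩ <;> by_cases hvi : 0 ≤ v i <;>
            simp [h0, hvi, abs_of_nonneg, abs_of_neg, lt_of_not_ge, le_of_lt]
      have hsum : |∑ i, s (e b) i * v i| = ∑ i, |v i| := by
        rw [Finset.sum_congr rfl fun i _ => hval i]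
        split_ifs with h0
        · exact abs_of_nonneg (Finset.sum_nonneg fun i _ => abs_nonneg _)
        · rw [Finset.sum_neg_distrib, abs_neg]
          exact abs_of_nonneg (Finset.sum_nonneg fun i _ => abs_nonneg _)
      rw [← hsum]
      exact le_ciSup (f := fun j => |∑ i, s j i * v i|) (Set.Finite.bddAbove (Set.finite_range _)) (e b)
  refine ⟨fun x => WithLp.toLp ⊤ (fun j => ∑ i, s j i * x i), Isometry.of_dist_eq fun x y => ?_⟩
  rw [PiLp.dist_eq_iSup, PiLp.dist_eq_sum (by norm_num)]
  simp only [Real.dist_eq, one_div_one, Real.rpow_one, ENNReal.toReal_one, Real.rpow_natCast, PiLp.toLp_apply]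
  have : ∀ j, (∑ i, s j i * x i) - (∑ i, s j i * y i) = ∑ i, s j i * (x i - y i) := by
    intro j; rw [← Finset.sum_sub_distrib]; congr 1; ext i; ring
  simp only [this]
  have := key (fun i => x i - y i)
  simpa using this
end

section
/- Let X be a subset of ℝ³ that is 1/8-dense with respect to the ℓ1 metric, and let e : ℝ³ → ℝ⁴ be the map e(x₁, x₂, x₃) = (−x₁ + x₂ + x₃, x₁ − x₂ + x₃, x₁ + x₂ − x₃, x₁ + x₂ + x₃). Then the open 1-neighborhood of e(X) in ℝ⁴ with the ℓ∞ metric, viewed as a topological subspace of (ℝ⁴, ℓ∞), is contractible. -/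
set_option maxHeartbeats 1000000

open Metric

namespace Stmt8Aux

abbrev E3 : Type := PiLp 1 (fun _ : Fin 3 => ℝ)
abbrev E4 : Type := PiLp ⊤ (fun _ : Fin 4 => ℝ)

noncomputable def vv : E4 := WithLp.toLp ⊤ ![1,1,1,-1]

lemma fin4cases {P : Fin 4 → Prop} (h0 : P 0) (h1 : P 1) (h2 : P 2) (h3 : P 3) :
    ∀ i, P i := by
  intro i
  match i with
  | 0 => exact h0
  | 1 => exact h1
  | 2 => exact h2
  | 3 => exact h3

lemma dist3_eq (z y : E3) : dist z y = |z 0 - y 0| + |z 1 - y 1| + |z 2 - y 2| := by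
  have h1 : (0:ℝ) < ENNReal.toReal 1 := by simp
  rw [PiLp.dist_eq_sum h1]
  simp [Real.dist_eq, Fin.sum_univ_three, ENNReal.toReal_one, Real.rpow_one]

lemma dist4_lt_iff {a b : E4} {c : ℝ} :
    dist a b < c ↔ ∀ i, |a i - b i| < c := by
  rw [PiLp.dist_eq_iSup]
  constructor
  · intro h i
    rw [← Real.dist_eq]
    exact lt_of_le_of_lt (le_ciSup (f := fun i => dist (a i) (b i))
      (Set.Finite.bddAbove (Set.finite_range _)) i) h
  · intro h
    obtain ⟨i0, hi0⟩ := Finite.exists_max (fun i => dist (a i) (b i))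
    calc ⨆ i, dist (a i) (b i) ≤ dist (a i0) (b i0) := ciSup_le hi0
    _ < c := by rw [Real.dist_eq]; exact h i0

variable (X : Set E3)
  (hdense : ∀ p : E3, ∃ y ∈ X, dist p y < 1 / 8)
  (e : E3 → E4)
  (he : ∀ x : E3,
    e x = ![-x 0 + x 1 + x 2, x 0 - x 1 + x 2, x 0 + x 1 - x 2, x 0 + x 1 + x 2])

include hdense he in
/-- Anything within 7/8 of a point of `e(ℝ³)` is in the thickening. -/
lemma memA (z : E3) (q : E4) (h : ∀ i, |q i - e z i| < 7/8) :
    q ∈ Metric.thickening 1 (e '' X) := by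
  obtain ⟨y, hy, hdy⟩ := hdense z
  rw [Metric.mem_thickening_iff]
  refine ⟨e y, ⟨y, hy, rfl⟩, ?_⟩
  have h1 : dist q (e z) < 7/8 := dist4_lt_iff.2 h
  have h2 : dist (e z) (e y) ≤ dist z y := by
    have hco : ∀ i, |e z i - e y i| ≤ dist z y := by
      rw [dist3_eq, he z, he y]
      have l0 := le_abs_self (z 0 - y 0); have m0 := neg_abs_le (z 0 - y 0)
      have l1 := le_abs_self (z 1 - y 1); have m1 := neg_abs_le (z 1 - y 1)
      have l2 := le_abs_self (z 2 - y 2); have m2 := neg_abs_le (z 2 - y 2)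
      refine fin4cases ?_ ?_ ?_ ?_
      · show |(-z 0 + z 1 + z 2) - (-y 0 + y 1 + y 2)| ≤ |z 0 - y 0| + |z 1 - y 1| + |z 2 - y 2|
        rw [abs_le]; constructor <;> linarith
      · show |(z 0 - z 1 + z 2) - (y 0 - y 1 + y 2)| ≤ |z 0 - y 0| + |z 1 - y 1| + |z 2 - y 2|
        rw [abs_le]; constructor <;> linarith
      · show |(z 0 + z 1 - z 2) - (y 0 + y 1 - y 2)| ≤ |z 0 - y 0| + |z 1 - y 1| + |z 2 - y 2|
        rw [abs_le]; constructor <;> linarith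
      · show |(z 0 + z 1 + z 2) - (y 0 + y 1 + y 2)| ≤ |z 0 - y 0| + |z 1 - y 1| + |z 2 - y 2|
        rw [abs_le]; constructor <;> linarith
    rw [PiLp.dist_eq_iSup]
    apply ciSup_le
    intro i
    rw [Real.dist_eq]
    exact hco i
  have h3 := dist_triangle q (e z) (e y)
  linarith

include hdense he in
lemma memMain (p : E4) (hp : p ∈ Metric.thickening 1 (e '' X))
    (u b : ℝ) (hu0 : 0 ≤ u) (hu1 : u ≤ 1) (hb0 : 0 ≤ b) (hb1 : b ≤ 1)
    (hbu : 0 < b → u = 1) :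
    (1 - b) • (p + ((u * (p 3 - p 0 - p 1 - p 2)) / 4) • vv)
      ∈ Metric.thickening 1 (e '' X) := by
  have m0 : (![(1:ℝ),1,1,-1]) 0 = 1 := rfl
  have m1 : (![(1:ℝ),1,1,-1]) 1 = 1 := rfl
  have m2 : (![(1:ℝ),1,1,-1]) 2 = 1 := rfl
  have m3 : (![(1:ℝ),1,1,-1]) 3 = -1 := rfl
  set r : ℝ := p 3 - p 0 - p 1 - p 2 with hr
  set z : E3 := WithLp.toLp 1 (![(1-b) * ((p 1 + p 2)/2 + r/4), (1-b) * ((p 0 + p 2)/2 + r/4),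
    (1-b) * ((p 0 + p 1)/2 + r/4)]) with hz
  have hP : ∀ i : Fin 4, ((1 - b) • (p + (u * r / 4) • vv)) i
      = (1 - b) * (p i + (u * r / 4) * (![(1:ℝ),1,1,-1]) i) := fun i => rfl
  have hez : ∀ i : Fin 4, e z i = (1 - b) * (p i + (r/4) * (![(1:ℝ),1,1,-1]) i) := by
    rw [he z]
    refine fin4cases ?_ ?_ ?_ ?_
    · show -((1-b) * ((p 1 + p 2)/2 + r/4)) + (1-b) * ((p 0 + p 2)/2 + r/4)
        + (1-b) * ((p 0 + p 1)/2 + r/4) = (1 - b) * (p 0 + r/4 * (![(1:ℝ),1,1,-1]) 0)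
      rw [m0]; ring
    · show ((1-b) * ((p 1 + p 2)/2 + r/4)) - (1-b) * ((p 0 + p 2)/2 + r/4)
        + (1-b) * ((p 0 + p 1)/2 + r/4) = (1 - b) * (p 1 + r/4 * (![(1:ℝ),1,1,-1]) 1)
      rw [m1]; ring
    · show ((1-b) * ((p 1 + p 2)/2 + r/4)) + (1-b) * ((p 0 + p 2)/2 + r/4)
        - (1-b) * ((p 0 + p 1)/2 + r/4) = (1 - b) * (p 2 + r/4 * (![(1:ℝ),1,1,-1]) 2)
      rw [m2]; ring
    · show ((1-b) * ((p 1 + p 2)/2 + r/4)) + (1-b) * ((p 0 + p 2)/2 + r/4)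
        + (1-b) * ((p 0 + p 1)/2 + r/4) = (1 - b) * (p 3 + r/4 * (![(1:ℝ),1,1,-1]) 3)
      rw [m3, hr]; ring
  clear_value z
  clear hz
  clear_value r
  rcases lt_or_ge 0 b with hb | hb
  · -- second stage: `u = 1`, the point is exactly `e z`
    have hu := hbu hb
    apply memA X hdense e he z
    intro i
    rw [hP i, hez i, hu]
    rw [show (1:ℝ) * r / 4 = r / 4 by ring, sub_self, abs_zero]
    norm_num
  · have hb' : b = 0 := le_antisymm hb hb0
    subst hb'
    rcases lt_or_ge ((1-u) * |r|) (7/2) with hA | hB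
    · -- close to the hyperplane: use density
      apply memA X hdense e he z
      intro i
      rw [hP i, hez i]
      have h4 : (1 - 0) * (p i + (u * r / 4) * (![(1:ℝ),1,1,-1]) i)
          - (1 - 0) * (p i + r/4 * (![(1:ℝ),1,1,-1]) i)
          = ((u * r / 4) - r/4) * (![(1:ℝ),1,1,-1]) i := by ring
      rw [h4, abs_mul]
      have h5 : |(![(1:ℝ),1,1,-1]) i| = 1 := by
        refine fin4cases (P := fun i => |(![(1:ℝ),1,1,-1]) i| = 1) ?_ ?_ ?_ ?_ i <;> simp [m0, m1, m2, m3]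
      rw [h5, mul_one, show u * r / 4 - r/4 = -(((1-u)/4) * r) by ring, abs_neg,
        abs_mul, abs_of_nonneg (by linarith : (0:ℝ) ≤ (1-u)/4)]
      linarith
    · -- far from the hyperplane: keep the original witness
      rw [Metric.mem_thickening_iff] at hp ⊢
      obtain ⟨q', ⟨y, hyX, rfl⟩, hdy⟩ := hp
      refine ⟨e y, ⟨y, hyX, rfl⟩, ?_⟩
      rw [dist4_lt_iff] at hdy ⊢
      have hey : e y 0 + e y 1 + e y 2 = e y 3 := by
        rw [he y]
        show (-y 0 + y 1 + y 2) + (y 0 - y 1 + y 2) + (y 0 + y 1 - y 2) = y 0 + y 1 + y 2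
        ring
      have hw0 := hdy 0; have hw1 := hdy 1; have hw2 := hdy 2; have hw3 := hdy 3
      rw [abs_lt] at hw0 hw1 hw2 hw3
      have hrw : r = (p 3 - e y 3) - (p 0 - e y 0) - (p 1 - e y 1) - (p 2 - e y 2) := by
        rw [hr]; linarith
      have hkey : (0 ≤ u * r / 4 ∧ u * r / 4 < 1/8 ∧ 7/2 ≤ r)
          ∨ (u * r / 4 ≤ 0 ∧ -(1/8) < u * r / 4 ∧ r ≤ -(7/2)) := by
        rcases abs_cases r with ⟨habs, hsgn⟩ | ⟨habs, hsgn⟩ <;> rw [habs] at hB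
        · left
          have hur0 : 0 ≤ u * r := mul_nonneg hu0 hsgn
          have hur1 : u * r ≤ r - 7/2 := by nlinarith
          have hr72 : 7/2 ≤ r := by linarith
          have hr4 : r < 4 := by linarith
          exact ⟨by linarith, by linarith, hr72⟩
        · right
          have hur0 : u * r ≤ 0 := by nlinarith
          have hur1 : r + 7/2 ≤ u * r := by nlinarith
          have hr72 : r ≤ -(7/2) := by linarith
          have hr4 : -4 < r := by linarith
          exact ⟨by linarith, by linarith, hr72⟩
      refine fin4cases ?_ ?_ ?_ ?_
      · rw [hP 0, m0, mul_one, abs_lt]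
        rcases hkey with ⟨k1, k2, k3⟩ | ⟨k1, k2, k3⟩ <;> constructor <;> linarith
      · rw [hP 1, m1, mul_one, abs_lt]
        rcases hkey with ⟨k1, k2, k3⟩ | ⟨k1, k2, k3⟩ <;> constructor <;> linarith
      · rw [hP 2, m2, mul_one, abs_lt]
        rcases hkey with ⟨k1, k2, k3⟩ | ⟨k1, k2, k3⟩ <;> constructor <;> linarith
      · rw [hP 3, m3, abs_lt]
        rcases hkey with ⟨k1, k2, k3⟩ | ⟨k1, k2, k3⟩ <;> constructor <;> linarith

end Stmt8Aux

open Stmt8Aux in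
/-- If `X ⊆ (ℝ³, ℓ1)` is `1/8`-dense, then the open `1`-neighborhood of `e(X)` in
`(ℝ⁴, ℓ∞)` is contractible. -/
theorem stmt_8 (X : Set (PiLp 1 (fun _ : Fin 3 => ℝ)))
    (hdense : ∀ p : PiLp 1 (fun _ : Fin 3 => ℝ), ∃ y ∈ X, dist p y < 1 / 8)
    (e : PiLp 1 (fun _ : Fin 3 => ℝ) → PiLp ⊤ (fun _ : Fin 4 => ℝ))
    (he : ∀ x : PiLp 1 (fun _ : Fin 3 => ℝ),
      e x = ![-x 0 + x 1 + x 2, x 0 - x 1 + x 2, x 0 + x 1 - x 2, x 0 + x 1 + x 2]) :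
    ContractibleSpace (Metric.thickening 1 (e '' X)) := by
  have h00 : ∀ i, e (0:E3) i = 0 := by
    rw [he 0]
    refine fin4cases ?_ ?_ ?_ ?_
    · show -(0:ℝ) + 0 + 0 = 0; norm_num
    · show (0:ℝ) - 0 + 0 = 0; norm_num
    · show (0:ℝ) + 0 - 0 = 0; norm_num
    · show (0:ℝ) + 0 + 0 = 0; norm_num
  have h0 : (0:E4) ∈ Metric.thickening 1 (e '' X) := by
    apply memA X hdense e he 0 0
    intro i
    rw [h00 i]
    show |(0:ℝ) - 0| < 7/8
    norm_num
  rw [contractible_iff_id_nullhomotopic]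
  refine ⟨⟨0, h0⟩, ?_⟩
  refine ⟨⟨⟨fun q => ⟨(1 - max (2*(q.1:ℝ)-1) 0) •
      ((q.2:E4) + (((min (2*(q.1:ℝ)) 1) *
        ((q.2:E4) 3 - (q.2:E4) 0 - (q.2:E4) 1 - (q.2:E4) 2))/4) • vv), ?_⟩, ?_⟩, ?_, ?_⟩⟩
  · -- membership
    rcases q with ⟨t, x⟩
    have ht0 : (0:ℝ) ≤ t := t.2.1
    have ht1 : (t:ℝ) ≤ 1 := t.2.2
    refine memMain X hdense e he _ x.2 _ _ (le_min (by linarith) zero_le_one)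
      (min_le_right _ _) (le_max_right _ _) (max_le (by linarith) zero_le_one) ?_
    intro h
    have h1 : (0:ℝ) < 2*(t:ℝ)-1 := by
      rcases lt_max_iff.mp h with h' | h'
      · exact h'
      · exact absurd h' (lt_irrefl 0)
    exact min_eq_right (by linarith)
  · -- continuity
    apply Continuous.subtype_mk
    have ct : Continuous fun q : unitInterval × (Metric.thickening 1 (e '' X)) => (q.1:ℝ) :=
      continuous_subtype_val.comp continuous_fst
    have cp : Continuous fun q : unitInterval × (Metric.thickening 1 (e '' X)) => (q.2:E4) :=
      continuous_subtype_val.comp continuous_snd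
    have capp : ∀ i : Fin 4,
        Continuous fun q : unitInterval × (Metric.thickening 1 (e '' X)) => (q.2:E4) i :=
      fun i => (continuous_apply i).comp ((PiLp.continuous_ofLp _ _).comp cp)
    exact ((continuous_const.sub (((continuous_const.mul ct).sub continuous_const).max
        continuous_const))).smul
      (cp.add ((((((continuous_const.mul ct).min continuous_const).mul
        ((((capp 3).sub (capp 0)).sub (capp 1)).sub (capp 2))).div_const 4)).smul
        continuous_const))
  · -- zero
    intro x
    apply Subtype.ext
    show (1 - max (2*((0:unitInterval):ℝ)-1) 0) •
      ((x:E4) + (((min (2*((0:unitInterval):ℝ)) 1) * _)/4) • vv) = (x:E4)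
    rw [show ((0:unitInterval):ℝ) = 0 from rfl]
    rw [show max (2*(0:ℝ)-1) 0 = 0 from by rw [max_eq_right]; norm_num]
    rw [show min (2*(0:ℝ)) 1 = 0 from by rw [min_eq_left] <;> norm_num]
    simp
  · -- one
    intro x
    apply Subtype.ext
    show (1 - max (2*((1:unitInterval):ℝ)-1) 0) •
      ((x:E4) + (((min (2*((1:unitInterval):ℝ)) 1) * _)/4) • vv) = (0:E4)
    rw [show ((1:unitInterval):ℝ) = 1 from rfl]
    rw [show max (2*(1:ℝ)-1) 0 = 1 from by rw [max_eq_left] <;> norm_num]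
    simp
end

section
/- Let X be a subset of ℝ³ that is 1/8-dense with respect to the ℓ1 metric, let e : ℝ³ → ℝ⁴ be the map e(x₁, x₂, x₃) = (−x₁ + x₂ + x₃, x₁ − x₂ + x₃, x₁ + x₂ − x₃, x₁ + x₂ + x₃), and let v = (1,1,1,−1) ∈ ℝ⁴. Then for every p' ∈ e(X), every p ∈ ℝ⁴ with ‖p − p'‖_∞ < 1, and every t ∈ [0,1], the point Φ(p,t) = p − (t/4)⟨p, v⟩ v lies in the open 1-neighborhood of e(X) with respect to the ℓ∞ metric, where ⟨·,·⟩ is the standard Euclidean inner product on ℝ⁴. -/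
private lemma fin4_forall {P : Fin 4 → Prop} (h0 : P 0) (h1 : P 1) (h2 : P 2) (h3 : P 3) :
    ∀ i, P i := by
  intro i; fin_cases i <;> assumption

private lemma key_aux (a c M t : ℝ) (haM : |a| ≤ M) (hac : |a - 4*c| ≤ 3*M) (hMlt : M < 1)
    (ht0 : 0 ≤ t) (ht1 : t ≤ 1) (hcase : 7/8 ≤ (1-t)*|c|) : |a - t*c| ≤ M := by
  have hM0 : 0 ≤ M := (abs_nonneg a).trans haM
  rw [abs_le] at haM hac ⊢
  rcases abs_cases c with ⟨hc1, hc2⟩ | ⟨hc1, hc2⟩ <;> rw [hc1] at hcase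
  · constructor <;> nlinarith [mul_nonneg ht0 hc2]
  · constructor <;> nlinarith [mul_nonneg ht0 (neg_nonneg.2 hc2.le)]

private lemma norm_le_of_forall (z : PiLp ⊤ (fun _ : Fin 4 => ℝ)) (r : ℝ)
    (h : ∀ i, |z i| ≤ r) : ‖z‖ ≤ r := by
  rw [PiLp.norm_eq_ciSup]
  exact ciSup_le fun i => by simpa [Real.norm_eq_abs] using h i

private lemma abs_apply_le_norm (z : PiLp ⊤ (fun _ : Fin 4 => ℝ)) (i : Fin 4) : |z i| ≤ ‖z‖ := by
  rw [PiLp.norm_eq_ciSup, ← Real.norm_eq_abs]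
  exact le_ciSup (f := fun j => ‖z j‖) (Set.Finite.bddAbove (Set.finite_range _)) i

private lemma dist_l1 (x y : PiLp 1 (fun _ : Fin 3 => ℝ)) :
    dist x y = |x 0 - y 0| + |x 1 - y 1| + |x 2 - y 2| := by
  have h : (0:ℝ) < ENNReal.toReal 1 := by norm_num
  rw [PiLp.dist_eq_sum h]
  simp [Fin.sum_univ_three, Real.dist_eq]

/-- For `X ⊆ (ℝ³, ℓ1)` which is `1/8`-dense, `p' ∈ e(X)`, `p` with `‖p − p'‖_∞ < 1`, and
`t ∈ [0,1]`, the point `Φ(p,t) = p − (t/4)⟨p,v⟩v` (with `v = (1,1,1,−1)`) lies in the open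
`1`-neighborhood of `e(X)` in `(ℝ⁴, ℓ∞)`. -/
theorem stmt_9 (X : Set (PiLp 1 (fun _ : Fin 3 => ℝ)))
    (hdense : ∀ p : PiLp 1 (fun _ : Fin 3 => ℝ), ∃ y ∈ X, dist p y < 1 / 8)
    (e : PiLp 1 (fun _ : Fin 3 => ℝ) → PiLp ⊤ (fun _ : Fin 4 => ℝ))
    (he : ∀ x : PiLp 1 (fun _ : Fin 3 => ℝ),
      e x = ![-x 0 + x 1 + x 2, x 0 - x 1 + x 2, x 0 + x 1 - x 2, x 0 + x 1 + x 2])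
    (v : PiLp ⊤ (fun _ : Fin 4 => ℝ)) (hv : v = WithLp.toLp ⊤ ![1, 1, 1, -1])
    (p' : PiLp ⊤ (fun _ : Fin 4 => ℝ)) (hp' : p' ∈ e '' X)
    (p : PiLp ⊤ (fun _ : Fin 4 => ℝ)) (hp : ‖p - p'‖ < 1)
    (t : ℝ) (ht : t ∈ Set.Icc (0 : ℝ) 1) :
    p - ((t / 4) * ∑ i, p i * v i) • v ∈ Metric.thickening 1 (e '' X) := by
  obtain ⟨ht0, ht1⟩ := ht
  obtain ⟨x', hx'X, hx'e⟩ := hp'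
  rw [Metric.mem_thickening_iff]
  set c : ℝ := (∑ i, p i * v i) / 4 with hcdef
  have hscalar : (t / 4) * ∑ i, p i * v i = t * c := by rw [hcdef]; ring
  rw [hscalar]
  have hv0 : v 0 = 1 := by rw [hv]; rfl
  have hv1 : v 1 = 1 := by rw [hv]; rfl
  have hv2 : v 2 = 1 := by rw [hv]; rfl
  have hv3 : v 3 = -1 := by rw [hv]; rfl
  have hsum : ∑ i, p i * v i = p 0 + p 1 + p 2 - p 3 := by
    rw [Fin.sum_univ_four, hv0, hv1, hv2, hv3]; ring
  have hc4 : p 0 + p 1 + p 2 - p 3 = 4 * c := by rw [hcdef, hsum]; ring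
  have hp'0 : p' 0 = -x' 0 + x' 1 + x' 2 := by rw [← hx'e, he]; rfl
  have hp'1 : p' 1 = x' 0 - x' 1 + x' 2 := by rw [← hx'e, he]; rfl
  have hp'2 : p' 2 = x' 0 + x' 1 - x' 2 := by rw [← hx'e, he]; rfl
  have hp'3 : p' 3 = x' 0 + x' 1 + x' 2 := by rw [← hx'e, he]; rfl
  have hp'sum : p' 0 + p' 1 + p' 2 - p' 3 = 0 := by
    rw [hp'0, hp'1, hp'2, hp'3]; ring
  have hiso : ∀ a b : PiLp 1 (fun _ : Fin 3 => ℝ), ‖e a - e b‖ ≤ dist a b := by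
    intro a b
    have hd := dist_l1 a b
    refine norm_le_of_forall _ _ (fin4_forall ?_ ?_ ?_ ?_) <;> rw [hd]
    · have h1 : (e a - e b) 0 = e a 0 - e b 0 := rfl
      rw [h1, he, he]
      simp only [Matrix.cons_val_zero]
      rw [abs_le]
      constructor <;>
        linarith [le_abs_self (a 0 - b 0), neg_abs_le (a 0 - b 0),
          le_abs_self (a 1 - b 1), neg_abs_le (a 1 - b 1),
          le_abs_self (a 2 - b 2), neg_abs_le (a 2 - b 2)]
    · have h1 : (e a - e b) 1 = e a 1 - e b 1 := rfl
      rw [h1, he, he]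
      simp only [Matrix.cons_val_one, Matrix.head_cons, Matrix.cons_val_zero]
      rw [abs_le]
      constructor <;>
        linarith [le_abs_self (a 0 - b 0), neg_abs_le (a 0 - b 0),
          le_abs_self (a 1 - b 1), neg_abs_le (a 1 - b 1),
          le_abs_self (a 2 - b 2), neg_abs_le (a 2 - b 2)]
    · have h1 : (e a - e b) 2 = e a 2 - e b 2 := rfl
      rw [h1, he, he]
      simp only [Matrix.cons_val_two, Matrix.tail_cons, Matrix.head_cons]
      rw [abs_le]
      constructor <;>
        linarith [le_abs_self (a 0 - b 0), neg_abs_le (a 0 - b 0),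
          le_abs_self (a 1 - b 1), neg_abs_le (a 1 - b 1),
          le_abs_self (a 2 - b 2), neg_abs_le (a 2 - b 2)]
    · have h1 : (e a - e b) 3 = e a 3 - e b 3 := rfl
      rw [h1, he, he]
      simp only [Matrix.cons_val_three, Matrix.tail_cons, Matrix.head_cons]
      rw [abs_le]
      constructor <;>
        linarith [le_abs_self (a 0 - b 0), neg_abs_le (a 0 - b 0),
          le_abs_self (a 1 - b 1), neg_abs_le (a 1 - b 1),
          le_abs_self (a 2 - b 2), neg_abs_le (a 2 - b 2)]
  by_cases hcase : (1 - t) * |c| < 7/8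
  · -- Case 1: project to the hyperplane and use density
    set x₀ : PiLp 1 (fun _ : Fin 3 => ℝ) :=
      WithLp.toLp 1 ![((p 1 - c * v 1) + (p 2 - c * v 2)) / 2,
        ((p 0 - c * v 0) + (p 2 - c * v 2)) / 2,
        ((p 0 - c * v 0) + (p 1 - c * v 1)) / 2] with hx₀
    have hx₀0 : x₀ 0 = ((p 1 - c * v 1) + (p 2 - c * v 2)) / 2 := rfl
    have hx₀1 : x₀ 1 = ((p 0 - c * v 0) + (p 2 - c * v 2)) / 2 := rfl
    have hx₀2 : x₀ 2 = ((p 0 - c * v 0) + (p 1 - c * v 1)) / 2 := rfl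
    have hex₀ : ∀ i, e x₀ i = p i - c * v i := by
      refine fin4_forall ?_ ?_ ?_ ?_
      · rw [he]
        simp only [Matrix.cons_val_zero]
        rw [hx₀0, hx₀1, hx₀2, hv0, hv1, hv2]
        ring
      · rw [he]
        simp only [Matrix.cons_val_one, Matrix.head_cons, Matrix.cons_val_zero]
        rw [hx₀0, hx₀1, hx₀2, hv0, hv1, hv2]
        ring
      · rw [he]
        simp only [Matrix.cons_val_two, Matrix.tail_cons, Matrix.head_cons]
        rw [hx₀0, hx₀1, hx₀2, hv0, hv1, hv2]
        ring
      · rw [he]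
        simp only [Matrix.cons_val_three, Matrix.tail_cons, Matrix.head_cons]
        rw [hx₀0, hx₀1, hx₀2, hv0, hv1, hv2, hv3]
        linarith [hc4]
    obtain ⟨y, hyX, hxy⟩ := hdense x₀
    refine ⟨e y, ⟨y, hyX, rfl⟩, ?_⟩
    have h1 : dist (p - (t * c) • v) (e y) ≤ dist (p - (t * c) • v) (e x₀) + dist (e x₀) (e y) :=
      dist_triangle _ _ _
    have h2 : dist (e x₀) (e y) < 1/8 :=
      lt_of_le_of_lt (by rw [dist_eq_norm]; exact hiso x₀ y) hxy
    have h3 : dist (p - (t * c) • v) (e x₀) ≤ (1 - t) * |c| := by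
      rw [dist_eq_norm]
      refine norm_le_of_forall _ _ (fin4_forall ?_ ?_ ?_ ?_)
      · have h4 : (p - (t * c) • v - e x₀) 0 = p 0 - (t * c) * v 0 - e x₀ 0 := rfl
        rw [h4, hex₀, hv0]
        have h5 : p 0 - t * c * 1 - (p 0 - c * 1) = (1 - t) * c := by ring
        rw [h5, abs_mul, abs_of_nonneg (by linarith : (0:ℝ) ≤ 1 - t)]
      · have h4 : (p - (t * c) • v - e x₀) 1 = p 1 - (t * c) * v 1 - e x₀ 1 := rfl
        rw [h4, hex₀, hv1]
        have h5 : p 1 - t * c * 1 - (p 1 - c * 1) = (1 - t) * c := by ring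
        rw [h5, abs_mul, abs_of_nonneg (by linarith : (0:ℝ) ≤ 1 - t)]
      · have h4 : (p - (t * c) • v - e x₀) 2 = p 2 - (t * c) * v 2 - e x₀ 2 := rfl
        rw [h4, hex₀, hv2]
        have h5 : p 2 - t * c * 1 - (p 2 - c * 1) = (1 - t) * c := by ring
        rw [h5, abs_mul, abs_of_nonneg (by linarith : (0:ℝ) ≤ 1 - t)]
      · have h4 : (p - (t * c) • v - e x₀) 3 = p 3 - (t * c) * v 3 - e x₀ 3 := rfl
        rw [h4, hex₀, hv3]
        have h5 : p 3 - t * c * (-1) - (p 3 - c * (-1)) = -((1 - t) * c) := by ring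
        rw [h5, abs_neg, abs_mul, abs_of_nonneg (by linarith : (0:ℝ) ≤ 1 - t)]
    linarith
  · -- Case 2: use p' itself
    push_neg at hcase
    refine ⟨p', ⟨x', hx'X, hx'e⟩, ?_⟩
    rw [dist_eq_norm]
    have hM : ‖p - p'‖ < 1 := hp
    have hd0 := abs_apply_le_norm (p - p') 0
    have hd1 := abs_apply_le_norm (p - p') 1
    have hd2 := abs_apply_le_norm (p - p') 2
    have hd3 := abs_apply_le_norm (p - p') 3
    rw [show (p - p') 0 = p 0 - p' 0 from rfl] at hd0
    rw [show (p - p') 1 = p 1 - p' 1 from rfl] at hd1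
    rw [show (p - p') 2 = p 2 - p' 2 from rfl] at hd2
    rw [show (p - p') 3 = p 3 - p' 3 from rfl] at hd3
    have hrel : (p 0 - p' 0) + (p 1 - p' 1) + (p 2 - p' 2) - (p 3 - p' 3) = 4 * c := by
      linarith [hc4, hp'sum]
    refine lt_of_le_of_lt (norm_le_of_forall _ _ (fin4_forall ?_ ?_ ?_ ?_)) hM
    · have h4 : (p - (t * c) • v - p') 0 = p 0 - (t * c) * v 0 - p' 0 := rfl
      rw [h4, hv0]
      have h5 : p 0 - t * c * 1 - p' 0 = (p 0 - p' 0) - t * c := by ring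
      rw [h5]
      refine key_aux _ _ _ _ hd0 ?_ hM ht0 ht1 hcase
      rw [abs_le]
      constructor <;>
        linarith [hrel, le_abs_self (p 1 - p' 1), neg_abs_le (p 1 - p' 1),
          le_abs_self (p 2 - p' 2), neg_abs_le (p 2 - p' 2),
          le_abs_self (p 3 - p' 3), neg_abs_le (p 3 - p' 3), hd1, hd2, hd3]
    · have h4 : (p - (t * c) • v - p') 1 = p 1 - (t * c) * v 1 - p' 1 := rfl
      rw [h4, hv1]
      have h5 : p 1 - t * c * 1 - p' 1 = (p 1 - p' 1) - t * c := by ring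
      rw [h5]
      refine key_aux _ _ _ _ hd1 ?_ hM ht0 ht1 hcase
      rw [abs_le]
      constructor <;>
        linarith [hrel, le_abs_self (p 0 - p' 0), neg_abs_le (p 0 - p' 0),
          le_abs_self (p 2 - p' 2), neg_abs_le (p 2 - p' 2),
          le_abs_self (p 3 - p' 3), neg_abs_le (p 3 - p' 3), hd0, hd2, hd3]
    · have h4 : (p - (t * c) • v - p') 2 = p 2 - (t * c) * v 2 - p' 2 := rfl
      rw [h4, hv2]
      have h5 : p 2 - t * c * 1 - p' 2 = (p 2 - p' 2) - t * c := by ring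
      rw [h5]
      refine key_aux _ _ _ _ hd2 ?_ hM ht0 ht1 hcase
      rw [abs_le]
      constructor <;>
        linarith [hrel, le_abs_self (p 0 - p' 0), neg_abs_le (p 0 - p' 0),
          le_abs_self (p 1 - p' 1), neg_abs_le (p 1 - p' 1),
          le_abs_self (p 3 - p' 3), neg_abs_le (p 3 - p' 3), hd0, hd1, hd3]
    · have h4 : (p - (t * c) • v - p') 3 = p 3 - (t * c) * v 3 - p' 3 := rfl
      rw [h4, hv3]
      have h5 : p 3 - t * c * (-1) - p' 3 = -((-(p 3 - p' 3)) - t * c) := by ring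
      rw [h5, abs_neg]
      have hd3' : |-(p 3 - p' 3)| ≤ ‖p - p'‖ := by rw [abs_neg]; exact hd3
      refine key_aux _ _ _ _ hd3' ?_ hM ht0 ht1 hcase
      rw [abs_le]
      constructor <;>
        linarith [hrel, le_abs_self (p 0 - p' 0), neg_abs_le (p 0 - p' 0),
          le_abs_self (p 1 - p' 1), neg_abs_le (p 1 - p' 1),
          le_abs_self (p 2 - p' 2), neg_abs_le (p 2 - p' 2), hd0, hd1, hd2]
end

section
/- Let v = (1,1,1,−1) ∈ ℝ⁴ and let p', p ∈ ℝ⁴ with ⟨p', v⟩ = 0. Set Δp = p − p', and suppose ‖Δp‖_∞ < 1 and |⟨Δp, v⟩| ≥ 7/2. Then for every t ∈ [0,1], ‖(p − (t/4)⟨p, v⟩ v) − p'‖_∞ < 1, where ⟨·,·⟩ is the standard Euclidean inner product on ℝ⁴. -/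
/-- Case 1 of the deformation-retraction argument: with `v = (1,1,1,−1)`, `⟨p',v⟩ = 0`,
`Δp = p − p'`, `‖Δp‖_∞ < 1` and `|⟨Δp,v⟩| ≥ 7/2`, for every `t ∈ [0,1]` one has
`‖(p − (t/4)⟨p,v⟩v) − p'‖_∞ < 1`. -/
theorem stmt_10 (v : PiLp ⊤ (fun _ : Fin 4 => ℝ)) (hv : v = WithLp.toLp ⊤ ![1, 1, 1, -1])
    (p' p : PiLp ⊤ (fun _ : Fin 4 => ℝ))
    (hp' : ∑ i, p' i * v i = 0)
    (hΔ : ‖p - p'‖ < 1)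
    (hbig : |∑ i, (p - p') i * v i| ≥ 7 / 2) :
    ∀ t ∈ Set.Icc (0 : ℝ) 1,
      ‖(p - ((t / 4) * ∑ i, p i * v i) • v) - p'‖ < 1 := by
  intro t ht
  obtain ⟨ht0, ht1⟩ := ht
  set N := ‖p - p'‖ with hN
  have ha : ∀ i, |p i - p' i| ≤ N := by
    intro i
    have : ‖(p - p') i‖ ≤ N := by
      rw [hN, PiLp.norm_eq_ciSup]
      exact le_ciSup (f := fun j => ‖(p - p') j‖)
        (Set.Finite.bddAbove (Set.finite_range _)) i
    simpa using this
  have hN0 : 0 ≤ N := norm_nonneg _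
  set s : ℝ := ∑ i, (p - p') i * v i with hs
  have hs' : s = (p 0 - p' 0) + (p 1 - p' 1) + (p 2 - p' 2) - (p 3 - p' 3) := by
    simp [hs, hv, Fin.sum_univ_four]
    ring
  have hpv : (∑ i, p i * v i) = s := by
    have h0 : (∑ i, p i * v i) - (∑ i, p' i * v i) = s := by
      simp [hs, Fin.sum_univ_four]
      ring
    rw [hp'] at h0; linarith
  have key : ‖(p - ((t / 4) * ∑ i, p i * v i) • v) - p'‖ ≤ max N (3/8) := by
    rw [PiLp.norm_eq_ciSup]
    apply ciSup_le
    intro i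
    have h0 := ha 0; have h1 := ha 1; have h2 := ha 2; have h3 := ha 3
    rw [abs_le] at h0 h1 h2 h3
    have hcase : 7/2 ≤ s ∨ s ≤ -(7/2) := by
      rcases le_abs.mp hbig with h | h
      · left; exact h
      · right; linarith
    have hcoord : ((p - ((t / 4) * ∑ i, p i * v i) • v) - p') i
        = (p i - p' i) - (t / 4) * s * v i := by
      simp [hpv]; ring
    rw [Real.norm_eq_abs, hcoord]
    have hle : |(p i - p' i) - (t / 4) * s * v i| ≤ max N (3/8) := by
      have hmN : N ≤ max N (3/8) := le_max_left _ _
      have hm3 : (3:ℝ)/8 ≤ max N (3/8) := le_max_right _ _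
      rcases hcase with hpos | hneg
      · have hA : 0 ≤ t / 4 * s := mul_nonneg (by linarith) (by linarith)
        have hB : t / 4 * s ≤ 1 / 4 * s :=
          mul_le_mul_of_nonneg_right (by linarith) (by linarith)
        rw [abs_le]
        fin_cases i <;> simp [hv, -le_sup_iff] <;> constructor <;> linarith
      · have hA : t / 4 * s ≤ 0 := mul_nonpos_of_nonneg_of_nonpos (by linarith) (by linarith)
        have hB : 1 / 4 * s ≤ t / 4 * s := by nlinarith
        rw [abs_le]
        fin_cases i <;> simp [hv, -le_sup_iff] <;> constructor <;> linarith
    exact hle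
  have : max N (3/8) < 1 := max_lt hΔ (by norm_num)
  linarith
end

section
/- Let X be a subset of ℝ³ and ε₀ > 0 be such that X is ε-dense in (ℝ³, ℓ1) for every ε > ε₀, and let e : ℝ³ → ℝ⁴ be the map e(x₁, x₂, x₃) = (−x₁ + x₂ + x₃, x₁ − x₂ + x₃, x₁ + x₂ − x₃, x₁ + x₂ + x₃). Then for every r > 16 ε₀, the open (r/2)-neighborhood of e(X) in ℝ⁴ with the ℓ∞ metric, viewed as a topological subspace, is contractible. -/
noncomputable section Aux12

abbrev E3' : Type := PiLp 1 (fun _ : Fin 3 => ℝ)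
abbrev E4' : Type := PiLp ⊤ (fun _ : Fin 4 => ℝ)

def fl12 (p : E4') : ℝ := p 0 + p 1 + p 2 - p 3

def vv12 : E4' := WithLp.toLp ⊤ ![1, 1, 1, -1]

lemma fl12_cont : Continuous fl12 := by
  have h : ∀ i : Fin 4, Continuous fun p : E4' => p i := fun i => PiLp.continuous_apply ⊤ _ i
  exact (((h 0).add (h 1)).add (h 2)).sub (h 3)

lemma dist4_lt {q q' : E4'} {δ : ℝ} (h : ∀ i, |q i - q' i| < δ) : dist q q' < δ := by
  rw [PiLp.dist_eq_iSup]
  obtain ⟨i₀, hi₀⟩ := Finite.exists_max (fun i : Fin 4 => dist (q i) (q' i))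
  calc ⨆ i, dist (q i) (q' i) ≤ dist (q i₀) (q' i₀) := ciSup_le hi₀
    _ < δ := by rw [Real.dist_eq]; exact h i₀

lemma dist4_le {q q' : E4'} {δ : ℝ} (h : ∀ i, |q i - q' i| ≤ δ) : dist q q' ≤ δ := by
  rw [PiLp.dist_eq_iSup]
  exact ciSup_le fun i => by rw [Real.dist_eq]; exact h i

lemma coord_lt_of_dist4 {q q' : E4'} {δ : ℝ} (h : dist q q' < δ) (i : Fin 4) :
    |q i - q' i| < δ := by
  rw [PiLp.dist_eq_iSup] at h
  refine lt_of_le_of_lt ?_ h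
  rw [← Real.dist_eq]
  exact le_ciSup (f := fun i => dist (q i) (q' i)) (Set.Finite.bddAbove (Set.finite_range _)) i

lemma dist3_sum {x y : E3'} : dist x y = |x 0 - y 0| + |x 1 - y 1| + |x 2 - y 2| := by
  rw [PiLp.dist_eq_sum (by norm_num : 0 < ENNReal.toReal 1)]
  simp [Fin.sum_univ_three, Real.dist_eq, Real.rpow_one]

lemma abs_comb (a b c a' b' c' : ℝ) (h1 : a' = a ∨ a' = -a) (h2 : b' = b ∨ b' = -b)
    (h3 : c' = c ∨ c' = -c) : |a' + b' + c'| ≤ |a| + |b| + |c| := by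
  have := abs_add_three a' b' c'
  have e1 : |a'| = |a| := by rcases h1 with h | h <;> rw [h] <;> simp [abs_neg]
  have e2 : |b'| = |b| := by rcases h2 with h | h <;> rw [h] <;> simp [abs_neg]
  have e3 : |c'| = |c| := by rcases h3 with h | h <;> rw [h] <;> simp [abs_neg]
  rw [e1, e2, e3] at this
  exact this

end Aux12

/-- If `X ⊆ (ℝ³, ℓ1)` is `ε`-dense for every `ε > ε₀`, then for every `r > 16ε₀` the open
`r/2`-neighborhood of `e(X)` in `(ℝ⁴, ℓ∞)` is contractible. -/
theorem stmt_12 (X : Set (PiLp 1 (fun _ : Fin 3 => ℝ))) (ε₀ : ℝ) (hε₀ : 0 < ε₀)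
    (hdense : ∀ ε : ℝ, ε > ε₀ → ∀ p : PiLp 1 (fun _ : Fin 3 => ℝ), ∃ y ∈ X, dist p y < ε)
    (e : PiLp 1 (fun _ : Fin 3 => ℝ) → PiLp ⊤ (fun _ : Fin 4 => ℝ))
    (he : ∀ x : PiLp 1 (fun _ : Fin 3 => ℝ),
      e x = ![-x 0 + x 1 + x 2, x 0 - x 1 + x 2, x 0 + x 1 - x 2, x 0 + x 1 + x 2]) :
    ∀ r : ℝ, r > 16 * ε₀ →
      ContractibleSpace (Metric.thickening (r / 2) (e '' X)) := by
  intro r hr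
  have hrpos : (0:ℝ) < r := by linarith
  set N : Set E4' := Metric.thickening (r / 2) (e '' X) with hNdef
  -- e maps into the hyperplane fl12 = 0
  have he0 : ∀ x : E3', e x 0 = -x 0 + x 1 + x 2 := fun x => by rw [he]; rfl
  have he1 : ∀ x : E3', e x 1 = x 0 - x 1 + x 2 := fun x => by rw [he]; rfl
  have he2 : ∀ x : E3', e x 2 = x 0 + x 1 - x 2 := fun x => by rw [he]; rfl
  have he3 : ∀ x : E3', e x 3 = x 0 + x 1 + x 2 := fun x => by rw [he]; rfl
  have hfl_e : ∀ x : E3', fl12 (e x) = 0 := by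
    intro x
    simp only [fl12, he0, he1, he2, he3]
    ring
  -- e is 1-Lipschitz from ℓ1 to ℓ∞
  have hlip : ∀ x y : E3', dist (e x) (e y) ≤ dist x y := by
    intro x y
    rw [dist3_sum]
    apply dist4_le
    intro i
    fin_cases i
    · show |e x 0 - e y 0| ≤ _
      rw [he0 x, he0 y,
        show (-x 0 + x 1 + x 2) - (-y 0 + y 1 + y 2)
          = -(x 0 - y 0) + (x 1 - y 1) + (x 2 - y 2) by ring]
      apply abs_comb <;> simp
    · show |e x 1 - e y 1| ≤ _
      rw [he1 x, he1 y,
        show (x 0 - x 1 + x 2) - (y 0 - y 1 + y 2)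
          = (x 0 - y 0) + -(x 1 - y 1) + (x 2 - y 2) by ring]
      apply abs_comb <;> simp
    · show |e x 2 - e y 2| ≤ _
      rw [he2 x, he2 y,
        show (x 0 + x 1 - x 2) - (y 0 + y 1 - y 2)
          = (x 0 - y 0) + (x 1 - y 1) + -(x 2 - y 2) by ring]
      apply abs_comb <;> simp
    · show |e x 3 - e y 3| ≤ _
      rw [he3 x, he3 y,
        show (x 0 + x 1 + x 2) - (y 0 + y 1 + y 2)
          = (x 0 - y 0) + (x 1 - y 1) + (x 2 - y 2) by ring]
      apply abs_comb <;> simp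
  -- Step 1: every point close enough to the hyperplane is in N
  have hC1 : ∀ q : E4', |fl12 q / 4| < r / 2 - ε₀ → q ∈ N := by
    intro q hq
    set t : ℝ := fl12 q / 4 with ht
    have hflq : q 0 + q 1 + q 2 - q 3 = 4 * t := by rw [ht]; simp [fl12]; ring
    set x0 : E3' := WithLp.toLp 1 ![(q 1 + q 2) / 2 - t, (q 0 + q 2) / 2 - t, (q 0 + q 1) / 2 - t] with hx0
    have hx00 : x0 0 = (q 1 + q 2) / 2 - t := rfl
    have hx01 : x0 1 = (q 0 + q 2) / 2 - t := rfl
    have hx02 : x0 2 = (q 0 + q 1) / 2 - t := rfl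
    have hdqe : dist q (e x0) ≤ |t| := by
      apply dist4_le
      intro i
      fin_cases i
      · show |q 0 - e x0 0| ≤ _
        rw [he0 x0, hx00, hx01, hx02,
          show q 0 - (-((q 1 + q 2) / 2 - t) + ((q 0 + q 2) / 2 - t) + ((q 0 + q 1) / 2 - t))
            = t by ring]
      · show |q 1 - e x0 1| ≤ _
        rw [he1 x0, hx00, hx01, hx02,
          show q 1 - (((q 1 + q 2) / 2 - t) - ((q 0 + q 2) / 2 - t) + ((q 0 + q 1) / 2 - t))
            = t by ring]
      · show |q 2 - e x0 2| ≤ _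
        rw [he2 x0, hx00, hx01, hx02,
          show q 2 - (((q 1 + q 2) / 2 - t) + ((q 0 + q 2) / 2 - t) - ((q 0 + q 1) / 2 - t))
            = t by ring]
      · show |q 3 - e x0 3| ≤ _
        rw [he3 x0, hx00, hx01, hx02,
          show q 3 - (((q 1 + q 2) / 2 - t) + ((q 0 + q 2) / 2 - t) + ((q 0 + q 1) / 2 - t))
            = -t by linarith, abs_neg]
    obtain ⟨y, hyX, hy⟩ := hdense (r / 2 - |t|) (by linarith [abs_nonneg t]) x0
    refine Metric.mem_thickening_iff.mpr ⟨e y, ⟨y, hyX, rfl⟩, ?_⟩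
    calc dist q (e y) ≤ dist q (e x0) + dist (e x0) (e y) := dist_triangle _ _ _
      _ ≤ |t| + dist x0 y := add_le_add hdqe (hlip _ _)
      _ < |t| + (r / 2 - |t|) := by linarith
      _ = r / 2 := by ring
  -- coordinates of vv12
  have hv0 : vv12 0 = 1 := rfl
  have hv1 : vv12 1 = 1 := rfl
  have hv2 : vv12 2 = 1 := rfl
  have hv3 : vv12 3 = -1 := rfl
  -- Step 2: moving towards the hyperplane stays in N
  have hL2 : ∀ p ∈ N, ∀ s : ℝ, 0 ≤ s → s ≤ 1 →
      p - (s * (fl12 p / 4)) • vv12 ∈ N := by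
    intro p hp s hs0 hs1
    set t : ℝ := fl12 p / 4 with ht
    have hc : ∀ i : Fin 4, (p - (s * t) • vv12) i = p i - (s * t) * vv12 i := by
      intro i
      rw [PiLp.sub_apply, PiLp.smul_apply, smul_eq_mul]
    by_cases hcase : |(1 - s) * t| < r / 2 - ε₀
    · apply hC1
      have hfl : fl12 (p - (s * t) • vv12) = 4 * ((1 - s) * t) := by
        simp only [fl12, hc, hv0, hv1, hv2, hv3]
        have : p 0 + p 1 + p 2 - p 3 = 4 * t := by rw [ht]; simp [fl12]; ring
        linarith
      rw [hfl, show 4 * ((1 - s) * t) / 4 = (1 - s) * t by ring]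
      exact hcase
    · push_neg at hcase
      obtain ⟨z, hz, hdz⟩ := Metric.mem_thickening_iff.mp hp
      obtain ⟨x, hxX, rfl⟩ := hz
      have hw : ∀ i, |p i - e x i| < r / 2 := fun i => by
        have := coord_lt_of_dist4 hdz i
        simpa [Real.dist_eq] using this
      have hw0 := abs_lt.mp (hw 0)
      have hw1 := abs_lt.mp (hw 1)
      have hw2 := abs_lt.mp (hw 2)
      have hw3 := abs_lt.mp (hw 3)
      have hsum : (p 0 - e x 0) + (p 1 - e x 1) + (p 2 - e x 2) - (p 3 - e x 3) = 4 * t := by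
        have h1 : fl12 (e x) = 0 := hfl_e x
        simp only [fl12] at h1
        have : p 0 + p 1 + p 2 - p 3 = 4 * t := by rw [ht]; simp [fl12]; ring
        linarith
      refine Metric.mem_thickening_iff.mpr ⟨e x, ⟨x, hxX, rfl⟩, dist4_lt ?_⟩
      have h1s : 0 ≤ 1 - s := by linarith
      rcases le_or_gt 0 t with htpos | htneg
      · -- t ≥ 0
        have habs : |(1 - s) * t| = (1 - s) * t := abs_of_nonneg (mul_nonneg h1s htpos)
        rw [habs] at hcase
        have hst : s * t = t - (1 - s) * t := by ring
        have hst0 : 0 ≤ s * t := mul_nonneg hs0 htpos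
        intro i
        fin_cases i
        · show |(p - (s * t) • vv12) 0 - e x 0| < r / 2
          rw [hc 0, hv0, abs_lt]; constructor <;> linarith
        · show |(p - (s * t) • vv12) 1 - e x 1| < r / 2
          rw [hc 1, hv1, abs_lt]; constructor <;> linarith
        · show |(p - (s * t) • vv12) 2 - e x 2| < r / 2
          rw [hc 2, hv2, abs_lt]; constructor <;> linarith
        · show |(p - (s * t) • vv12) 3 - e x 3| < r / 2
          rw [hc 3, hv3, abs_lt]; constructor <;> linarith
      · -- t < 0
        have habs : |(1 - s) * t| = -((1 - s) * t) := abs_of_nonpos (mul_nonpos_of_nonneg_of_nonpos h1s htneg.le)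
        rw [habs] at hcase
        have hst : s * t = t - (1 - s) * t := by ring
        have hst0 : s * t ≤ 0 := mul_nonpos_of_nonneg_of_nonpos hs0 htneg.le
        intro i
        fin_cases i
        · show |(p - (s * t) • vv12) 0 - e x 0| < r / 2
          rw [hc 0, hv0, abs_lt]; constructor <;> linarith
        · show |(p - (s * t) • vv12) 1 - e x 1| < r / 2
          rw [hc 1, hv1, abs_lt]; constructor <;> linarith
        · show |(p - (s * t) • vv12) 2 - e x 2| < r / 2
          rw [hc 2, hv2, abs_lt]; constructor <;> linarith
        · show |(p - (s * t) • vv12) 3 - e x 3| < r / 2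
          rw [hc 3, hv3, abs_lt]; constructor <;> linarith
  -- base point
  obtain ⟨x₀, hx₀X, _⟩ := hdense (ε₀ + 1) (by linarith) 0
  have hq₀N : e x₀ ∈ N := by
    refine Metric.mem_thickening_iff.mpr ⟨e x₀, ⟨x₀, hx₀X, rfl⟩, ?_⟩
    simp [dist_self]; linarith
  -- continuity facts
  have hGcont : Continuous fun z : ℝ × E4' => z.2 - (z.1 * (fl12 z.2 / 4)) • vv12 :=
    continuous_snd.sub
      ((continuous_fst.mul ((fl12_cont.comp continuous_snd).div_const 4)).smul
        continuous_const)
  have hfl_pi : ∀ p : E4', fl12 (p - (fl12 p / 4) • vv12) = 0 := by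
    intro p
    simp only [fl12, PiLp.sub_apply, PiLp.smul_apply, smul_eq_mul, hv0, hv1, hv2, hv3]
    ring
  -- the retraction map as a continuous self-map of N
  have hmemπ : ∀ p : ↥N, (p : E4') - (fl12 (p : E4') / 4) • vv12 ∈ N := by
    intro p
    have := hL2 p p.2 1 zero_le_one le_rfl
    simpa using this
  set πc : C(↥N, ↥N) :=
    ⟨fun p => ⟨(p : E4') - (fl12 (p : E4') / 4) • vv12, hmemπ p⟩, by
      refine Continuous.subtype_mk ?_ _
      have h : Continuous fun p : ↥N => ((1 : ℝ), (p : E4')) :=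
        (continuous_const.prodMk continuous_subtype_val)
      exact (hGcont.comp h).congr fun p => by simp [Function.comp]⟩ with hπc
  rw [contractible_iff_id_nullhomotopic]
  refine ⟨⟨e x₀, hq₀N⟩, ?_⟩
  have H1 : (ContinuousMap.id ↥N).Homotopy πc := by
    refine ContinuousMap.Homotopy.mk
      ⟨fun z => ⟨(z.2 : E4') - ((z.1 : ℝ) * (fl12 (z.2 : E4') / 4)) • vv12,
        hL2 _ z.2.2 _ z.1.2.1 z.1.2.2⟩, ?_⟩ ?_ ?_
    · refine Continuous.subtype_mk ?_ _
      exact hGcont.comp ((continuous_subtype_val.comp continuous_fst).prodMk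
        (continuous_subtype_val.comp continuous_snd))
    · intro p
      apply Subtype.ext
      simp
    · intro p
      apply Subtype.ext
      simp [hπc]
  have H2 : πc.Homotopy (ContinuousMap.const ↥N ⟨e x₀, hq₀N⟩) := by
    refine ContinuousMap.Homotopy.mk
      ⟨fun z => ⟨(1 - (z.1 : ℝ)) • ((z.2 : E4') - (fl12 (z.2 : E4') / 4) • vv12)
          + (z.1 : ℝ) • e x₀, ?_⟩, ?_⟩ ?_ ?_
    · apply hC1
      have h1 : fl12 ((1 - (z.1 : ℝ)) • ((z.2 : E4') - (fl12 (z.2 : E4') / 4) • vv12)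
          + (z.1 : ℝ) • e x₀)
          = (1 - (z.1 : ℝ)) * fl12 ((z.2 : E4') - (fl12 (z.2 : E4') / 4) • vv12)
            + (z.1 : ℝ) * fl12 (e x₀) := by
        simp only [fl12, PiLp.add_apply, PiLp.smul_apply, smul_eq_mul]
        ring
      rw [h1, hfl_pi, hfl_e]
      simp
      linarith
    · refine Continuous.subtype_mk ?_ _
      have hπbar : Continuous fun q : E4' => q - (fl12 q / 4) • vv12 := by
        have h : Continuous fun q : E4' => ((1 : ℝ), q) :=
          continuous_const.prodMk continuous_id
        exact (hGcont.comp h).congr fun q => by simp [Function.comp]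
      exact (((continuous_const.sub (continuous_subtype_val.comp
          continuous_fst)).smul (hπbar.comp
          (continuous_subtype_val.comp continuous_snd)))).add
        ((continuous_subtype_val.comp continuous_fst).smul continuous_const)
    · intro p
      apply Subtype.ext
      simp [hπc]
    · intro p
      apply Subtype.ext
      simp
  exact ⟨H1.trans H2⟩
end

section
/- Let e : ℝ³ → ℝ⁴ be the map e(x₁, x₂, x₃) = (−x₁ + x₂ + x₃, x₁ − x₂ + x₃, x₁ + x₂ − x₃, x₁ + x₂ + x₃). For every r > 24, the open (r/2)-neighborhood of e(ℤ³) in ℝ⁴ with the ℓ∞ metric, viewed as a topological subspace, is contractible. -/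
open scoped ENNReal

set_option maxHeartbeats 1000000

namespace Stmt14Helper

abbrev E4 := PiLp ⊤ (fun _ : Fin 4 => ℝ)

noncomputable def uu (y : E4) : ℝ := y 3 - y 0 - y 1 - y 2

noncomputable def vv : E4 := (WithLp.equiv ⊤ _).symm ![-(4⁻¹:ℝ), -(4⁻¹), -(4⁻¹), 4⁻¹]

lemma dist_le_coords (x y : E4) {d : ℝ} (h : ∀ i, |x i - y i| ≤ d) : dist x y ≤ d := by
  rw [PiLp.dist_eq_iSup]; exact ciSup_le fun i => by rw [Real.dist_eq]; exact h i

lemma coord_le_dist (x y : E4) (i : Fin 4) : |x i - y i| ≤ dist x y := by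
  rw [PiLp.dist_eq_iSup]
  exact le_trans (le_of_eq (Real.dist_eq _ _).symm)
    (le_ciSup (f := fun i => dist (x i) (y i)) (Set.Finite.bddAbove (Set.finite_range _)) i)

lemma dist_lt_coords (x y : E4) {d : ℝ} (h : ∀ i, |x i - y i| < d) : dist x y < d := by
  obtain ⟨i0, hi0⟩ := Finite.exists_max (fun i : Fin 4 => |x i - y i|)
  exact lt_of_le_of_lt (dist_le_coords x y fun i => hi0 i) (h i0)

lemma approx (Z3 : Set (PiLp 1 (fun _ : Fin 3 => ℝ)))
    (hZ3 : Z3 = {x : PiLp 1 (fun _ : Fin 3 => ℝ) | ∀ i, ∃ m : ℤ, x i = (m : ℝ)})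
    (e : PiLp 1 (fun _ : Fin 3 => ℝ) → E4)
    (he : ∀ x : PiLp 1 (fun _ : Fin 3 => ℝ),
      e x = ![-x 0 + x 1 + x 2, x 0 - x 1 + x 2, x 0 + x 1 - x 2, x 0 + x 1 + x 2])
    (y : E4) : ∃ z ∈ e '' Z3, dist y z ≤ |uu y|/4 + 3 := by
  set a := uu y with ha
  set m0 : ℤ := round ((y 0 + a/4)/2) with hm0
  set m1 : ℤ := round ((y 1 + a/4)/2) with hm1
  set m2 : ℤ := round ((y 2 + a/4)/2) with hm2
  set x : PiLp 1 (fun _ : Fin 3 => ℝ) :=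
    (WithLp.equiv 1 _).symm ![(m1:ℝ)+(m2:ℝ), (m0:ℝ)+(m2:ℝ), (m0:ℝ)+(m1:ℝ)] with hx
  have hx0 : x 0 = (m1:ℝ)+(m2:ℝ) := rfl
  have hx1 : x 1 = (m0:ℝ)+(m2:ℝ) := rfl
  have hx2 : x 2 = (m0:ℝ)+(m1:ℝ) := rfl
  have hxZ : x ∈ Z3 := by
    rw [hZ3]
    intro i
    fin_cases i
    · exact ⟨m1 + m2, by rw [show x ⟨0, by norm_num⟩ = x 0 from rfl, hx0]; push_cast; ring⟩
    · exact ⟨m0 + m2, by rw [show x ⟨1, by norm_num⟩ = x 1 from rfl, hx1]; push_cast; ring⟩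
    · exact ⟨m0 + m1, by rw [show x ⟨2, by norm_num⟩ = x 2 from rfl, hx2]; push_cast; ring⟩
  have he0 : (e x) 0 = 2*(m0:ℝ) := by rw [he x]; show -x 0 + x 1 + x 2 = _; rw [hx0, hx1, hx2]; ring
  have he1 : (e x) 1 = 2*(m1:ℝ) := by rw [he x]; show x 0 - x 1 + x 2 = _; rw [hx0, hx1, hx2]; ring
  have he2 : (e x) 2 = 2*(m2:ℝ) := by rw [he x]; show x 0 + x 1 - x 2 = _; rw [hx0, hx1, hx2]; ring
  have he3 : (e x) 3 = 2*((m0:ℝ)+(m1:ℝ)+(m2:ℝ)) := by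
    rw [he x]; show x 0 + x 1 + x 2 = _; rw [hx0, hx1, hx2]; ring
  have hr0 : |(y 0 + a/4)/2 - m0| ≤ 1/2 := by rw [hm0]; exact abs_sub_round _
  have hr1 : |(y 1 + a/4)/2 - m1| ≤ 1/2 := by rw [hm1]; exact abs_sub_round _
  have hr2 : |(y 2 + a/4)/2 - m2| ≤ 1/2 := by rw [hm2]; exact abs_sub_round _
  rw [abs_le] at hr0 hr1 hr2
  obtain ⟨hr0l, hr0r⟩ := hr0; obtain ⟨hr1l, hr1r⟩ := hr1; obtain ⟨hr2l, hr2r⟩ := hr2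
  have hy3 : y 3 = a + y 0 + y 1 + y 2 := by
    rw [ha]; show y 3 = (y 3 - y 0 - y 1 - y 2) + y 0 + y 1 + y 2; ring
  have habs1 := le_abs_self a
  have habs2 := neg_abs_le a
  refine ⟨e x, ⟨x, hxZ, rfl⟩, dist_le_coords y (e x) fun i => ?_⟩
  fin_cases i
  · rw [show (⟨0, by norm_num⟩ : Fin 4) = 0 from rfl, he0, abs_le]; constructor <;> linarith
  · rw [show (⟨1, by norm_num⟩ : Fin 4) = 1 from rfl, he1, abs_le]; constructor <;> linarith
  · rw [show (⟨2, by norm_num⟩ : Fin 4) = 2 from rfl, he2, abs_le]; constructor <;> linarith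
  · rw [show (⟨3, by norm_num⟩ : Fin 4) = 3 from rfl, he3, abs_le]; constructor <;> linarith

lemma flow_mem {δ : ℝ} (hδ : 12 < δ) {L : Set E4}
    (happrox : ∀ y : E4, ∃ z ∈ L, dist y z ≤ |uu y|/4 + 3)
    (hL0 : ∀ z ∈ L, uu z = 0)
    {y : E4} (hy : ∃ z ∈ L, dist y z < δ) {s : ℝ} (hs0 : 0 ≤ s) (hs1 : s ≤ 1) :
    ∃ z ∈ L, dist (y - (s * uu y) • vv) z < δ := by
  set a := uu y with ha
  set p : E4 := y - (s*a) • vv with hp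
  have hv0 : vv 0 = -(4⁻¹:ℝ) := rfl
  have hv1 : vv 1 = -(4⁻¹:ℝ) := rfl
  have hv2 : vv 2 = -(4⁻¹:ℝ) := rfl
  have hv3 : vv 3 = (4⁻¹:ℝ) := rfl
  have hp0 : p 0 = y 0 + s*a/4 := by
    rw [hp, PiLp.sub_apply, PiLp.smul_apply, hv0, smul_eq_mul]; ring
  have hp1 : p 1 = y 1 + s*a/4 := by
    rw [hp, PiLp.sub_apply, PiLp.smul_apply, hv1, smul_eq_mul]; ring
  have hp2 : p 2 = y 2 + s*a/4 := by
    rw [hp, PiLp.sub_apply, PiLp.smul_apply, hv2, smul_eq_mul]; ring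
  have hp3 : p 3 = y 3 - s*a/4 := by
    rw [hp, PiLp.sub_apply, PiLp.smul_apply, hv3, smul_eq_mul]; ring
  by_cases hcase : (1-s)*|a|/4 + 3 < δ
  · obtain ⟨z, hzL, hzd⟩ := happrox p
    refine ⟨z, hzL, lt_of_le_of_lt hzd ?_⟩
    have hup : uu p = (1-s)*a := by
      show p 3 - p 0 - p 1 - p 2 = _
      rw [hp0, hp1, hp2, hp3, ha]
      simp only [uu]
      ring
    rw [hup, abs_mul, abs_of_nonneg (by linarith : (0:ℝ) ≤ 1-s)]
    exact hcase
  · push_neg at hcase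
    obtain ⟨z, hzL, hzd⟩ := hy
    have hz3 : z 3 - z 0 - z 1 - z 2 = 0 := hL0 z hzL
    have hw0 := abs_lt.mp (lt_of_le_of_lt (coord_le_dist y z 0) hzd)
    have hw1 := abs_lt.mp (lt_of_le_of_lt (coord_le_dist y z 1) hzd)
    have hw2 := abs_lt.mp (lt_of_le_of_lt (coord_le_dist y z 2) hzd)
    have hw3 := abs_lt.mp (lt_of_le_of_lt (coord_le_dist y z 3) hzd)
    obtain ⟨hw0l, hw0r⟩ := hw0; obtain ⟨hw1l, hw1r⟩ := hw1
    obtain ⟨hw2l, hw2r⟩ := hw2; obtain ⟨hw3l, hw3r⟩ := hw3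
    have haw : a = (y 3 - z 3) - (y 0 - z 0) - (y 1 - z 1) - (y 2 - z 2) := by
      rw [ha]; show y 3 - y 0 - y 1 - y 2 = _; linarith
    refine ⟨z, hzL, dist_lt_coords p z fun i => ?_⟩
    rcases abs_cases a with ⟨hae, ha0⟩ | ⟨hae, ha0⟩
    · rw [hae] at hcase
      have hsa1 : a - s*a ≥ 4*δ - 12 := by nlinarith
      have hsa2 : 0 ≤ s*a := mul_nonneg hs0 ha0
      fin_cases i
      · rw [show (⟨0, by norm_num⟩ : Fin 4) = 0 from rfl, hp0, abs_lt]; constructor <;> linarith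
      · rw [show (⟨1, by norm_num⟩ : Fin 4) = 1 from rfl, hp1, abs_lt]; constructor <;> linarith
      · rw [show (⟨2, by norm_num⟩ : Fin 4) = 2 from rfl, hp2, abs_lt]; constructor <;> linarith
      · rw [show (⟨3, by norm_num⟩ : Fin 4) = 3 from rfl, hp3, abs_lt]; constructor <;> linarith
    · rw [hae] at hcase
      have hsa1 : s*a - a ≥ 4*δ - 12 := by nlinarith
      have hsa2 : s*a ≤ 0 := mul_nonpos_of_nonneg_of_nonpos hs0 ha0.le
      fin_cases i
      · rw [show (⟨0, by norm_num⟩ : Fin 4) = 0 from rfl, hp0, abs_lt]; constructor <;> linarith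
      · rw [show (⟨1, by norm_num⟩ : Fin 4) = 1 from rfl, hp1, abs_lt]; constructor <;> linarith
      · rw [show (⟨2, by norm_num⟩ : Fin 4) = 2 from rfl, hp2, abs_lt]; constructor <;> linarith
      · rw [show (⟨3, by norm_num⟩ : Fin 4) = 3 from rfl, hp3, abs_lt]; constructor <;> linarith

lemma continuous_uu : Continuous uu :=
  (((PiLp.continuous_apply ⊤ _ (3:Fin 4)).sub (PiLp.continuous_apply ⊤ _ 0)).sub (PiLp.continuous_apply ⊤ _ 1)).sub
    (PiLp.continuous_apply ⊤ _ 2)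

noncomputable def G (t : ℝ) (y : E4) : E4 :=
  (1 - max (2*t - 1) 0) • (y - (min (2*t) 1 * uu y) • vv)

lemma continuous_G : Continuous fun q : ℝ × E4 => G q.1 q.2 := by
  have h1 : Continuous fun q : ℝ × E4 => 1 - max (2*q.1 - 1) 0 :=
    continuous_const.sub (((continuous_const.mul continuous_fst).sub continuous_const).max
      continuous_const)
  have h2 : Continuous fun q : ℝ × E4 => min (2*q.1) 1 * uu q.2 :=
    (((continuous_const.mul continuous_fst).min continuous_const).mul
      (continuous_uu.comp continuous_snd))
  exact h1.smul (continuous_snd.sub (h2.smul continuous_const))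

lemma uu_G_of_half {t : ℝ} (ht : 1/2 ≤ t) (y : E4) : uu (G t y) = 0 := by
  have hmin : min (2*t) 1 = 1 := min_eq_right (by linarith)
  have hableg : ∀ (c : ℝ) (x : E4), uu (c • x) = c * uu x := by
    intro c x
    show (c • x) 3 - (c • x) 0 - (c • x) 1 - (c • x) 2 = _
    simp only [PiLp.smul_apply, smul_eq_mul, uu]; ring
  have hsub : uu (y - (1 * uu y) • vv) = 0 := by
    show (y - (1 * uu y) • vv) 3 - _ - _ - _ = 0
    simp only [PiLp.sub_apply, PiLp.smul_apply, smul_eq_mul, uu]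
    have hv0 : vv 0 = -(4⁻¹:ℝ) := rfl
    have hv1 : vv 1 = -(4⁻¹:ℝ) := rfl
    have hv2 : vv 2 = -(4⁻¹:ℝ) := rfl
    have hv3 : vv 3 = (4⁻¹:ℝ) := rfl
    rw [hv0, hv1, hv2, hv3]; ring
  rw [G, hmin, hableg, hsub, mul_zero]

lemma G_zero (y : E4) : G 0 y = y := by rw [G]; norm_num

lemma G_one (y : E4) : G 1 y = 0 := by rw [G]; norm_num

end Stmt14Helper

open Stmt14Helper in
/-- For every `r > 24`, the open `r/2`-neighborhood of `e(ℤ³)` in `(ℝ⁴, ℓ∞)` is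
contractible. -/
theorem stmt_14 (Z3 : Set (PiLp 1 (fun _ : Fin 3 => ℝ)))
    (hZ3 : Z3 = {x : PiLp 1 (fun _ : Fin 3 => ℝ) | ∀ i, ∃ m : ℤ, x i = (m : ℝ)})
    (e : PiLp 1 (fun _ : Fin 3 => ℝ) → PiLp ⊤ (fun _ : Fin 4 => ℝ))
    (he : ∀ x : PiLp 1 (fun _ : Fin 3 => ℝ),
      e x = ![-x 0 + x 1 + x 2, x 0 - x 1 + x 2, x 0 + x 1 - x 2, x 0 + x 1 + x 2]) :
    ∀ r : ℝ, r > 24 →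
      ContractibleSpace (Metric.thickening (r / 2) (e '' Z3)) := by
  intro r hr
  have hδ : (12:ℝ) < r/2 := by linarith
  set δ : ℝ := r/2 with hδdef
  set L : Set E4 := e '' Z3 with hLdef
  have happrox : ∀ y : E4, ∃ z ∈ L, dist y z ≤ |uu y|/4 + 3 := approx Z3 hZ3 e he
  have hL0 : ∀ z ∈ L, uu z = 0 := by
    rintro z ⟨x, -, rfl⟩
    show (e x) 3 - (e x) 0 - (e x) 1 - (e x) 2 = 0
    rw [he x]
    show (x 0 + x 1 + x 2) - (-x 0 + x 1 + x 2) - (x 0 - x 1 + x 2) - (x 0 + x 1 - x 2) = 0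
    ring
  have hmemG : ∀ (t : ℝ), 0 ≤ t → t ≤ 1 → ∀ y : E4, y ∈ Metric.thickening δ L →
      G t y ∈ Metric.thickening δ L := by
    intro t ht0 ht1 y hy
    rw [Metric.mem_thickening_iff] at hy ⊢
    rcases le_or_gt t (1/2) with hth | hth
    · have hmax : max (2*t-1) 0 = 0 := max_eq_right (by linarith)
      have hmin : min (2*t) 1 = 2*t := min_eq_left (by linarith)
      have hGe : G t y = y - (2*t * uu y) • vv := by rw [G, hmax, hmin, sub_zero, one_smul]
      rw [hGe]
      exact flow_mem hδ happrox hL0 hy (by linarith) (by linarith)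
    · have hu0 : uu (G t y) = 0 := uu_G_of_half (by linarith) y
      obtain ⟨z, hzL, hzd⟩ := happrox (G t y)
      refine ⟨z, hzL, lt_of_le_of_lt hzd ?_⟩
      rw [hu0]
      norm_num
      linarith
  have h0mem : (0:E4) ∈ Metric.thickening δ L := by
    obtain ⟨z, hzL, hzd⟩ := happrox 0
    rw [Metric.mem_thickening_iff]
    refine ⟨z, hzL, lt_of_le_of_lt hzd ?_⟩
    have hu0 : uu (0:E4) = 0 := by
      show (0:E4) 3 - (0:E4) 0 - (0:E4) 1 - (0:E4) 2 = 0
      norm_num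
    rw [hu0]
    norm_num
    linarith
  rw [contractible_iff_id_nullhomotopic]
  refine ⟨⟨0, h0mem⟩, ⟨?_⟩⟩
  refine ⟨⟨fun q => ⟨G (q.1 : ℝ) (q.2 : E4), hmemG _ q.1.2.1 q.1.2.2 _ q.2.2⟩, ?_⟩, ?_, ?_⟩
  · exact (continuous_G.comp
      ((continuous_subtype_val.comp continuous_fst).prodMk
        (continuous_subtype_val.comp continuous_snd))).subtype_mk _
  · intro x
    exact Subtype.ext (by simpa using G_zero (x : E4))
  · intro x
    exact Subtype.ext (by simpa using G_one (x : E4))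
end

section
/- Let G(ℤ³) = {x ∈ ℝ³ : at least two of x₁, x₂, x₃ are integers} be the lattice graph of ℤ³, and let e : ℝ³ → ℝ⁴ be the map e(x₁, x₂, x₃) = (−x₁ + x₂ + x₃, x₁ − x₂ + x₃, x₁ + x₂ − x₃, x₁ + x₂ + x₃). For every r > 8, the open (r/2)-neighborhood of e(G(ℤ³)) in ℝ⁴ with the ℓ∞ metric, viewed as a topological subspace, is contractible. -/
set_option maxHeartbeats 1000000


lemma stmt16_key (δ σ σ' u v w : ℝ) (hδ : 4 < δ) (hσ0 : 0 ≤ σ') (hσ : σ' ≤ σ)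
    (h1 : |w - (σ + v)| < δ) (h2 : |w - (σ - v)| < δ)
    (h3 : |w - (u - σ)| < δ) (h4 : |w - (σ - u)| < δ) :
    ∃ (k : ℤ) (w' : ℝ), |w' - (σ' + v)| < δ ∧ |w' - (σ' - v)| < δ ∧
      |w' - ((u - 2 * k) - σ')| < δ ∧ |w' - (σ' - (u - 2 * k))| < δ := by
  rw [abs_lt] at h1 h2 h3 h4
  have hv1 : v ≤ |v| := le_abs_self v
  have hv2 : -|v| ≤ v := neg_abs_le v
  have hvδ : |v| < δ := by rcases abs_cases v with ⟨hh, _⟩ | ⟨hh, _⟩ <;> linarith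
  by_cases hc : σ' + |v| + 1 < 2 * δ
  · set k := round ((u - σ') / 2) with hk
    have hrk : |(u - σ') / 2 - k| ≤ 1 / 2 := abs_sub_round _
    set E := u - 2 * (k : ℝ) - σ' with hE
    have hE1 : |E| ≤ 1 := by
      have h : E = 2 * ((u - σ') / 2 - k) := by rw [hE]; ring
      rw [h, abs_mul]
      calc |(2:ℝ)| * |(u - σ') / 2 - k| ≤ 2 * (1/2) := by
            rw [abs_of_nonneg (by norm_num : (0:ℝ) ≤ 2)]
            exact mul_le_mul_of_nonneg_left hrk (by norm_num)
        _ = 1 := by norm_num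
    have hE2 : E ≤ |E| := le_abs_self _
    have hE3 : -|E| ≤ E := neg_abs_le _
    set A := max (σ' + |v| - δ) (|E| - δ) with hA
    set B := min (σ' - |v| + δ) (δ - |E|) with hB
    have hAB : A < B := by
      rw [hA, hB, max_lt_iff, lt_min_iff, lt_min_iff]
      refine ⟨⟨by linarith, by linarith⟩, ⟨by linarith, by linarith⟩⟩
    have hA1 : σ' + |v| - δ ≤ A := le_max_left _ _
    have hA2 : |E| - δ ≤ A := le_max_right _ _
    have hB1 : B ≤ σ' - |v| + δ := min_le_left _ _
    have hB2 : B ≤ δ - |E| := min_le_right _ _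
    refine ⟨k, (A + B) / 2, ?_, ?_, ?_, ?_⟩ <;> rw [abs_lt] <;> constructor <;> linarith
  · push_neg at hc
    have hw : σ + |v| - δ < w := by rcases abs_cases v with ⟨hh, _⟩ | ⟨hh, _⟩ <;> linarith
    have hu : u < 2 * δ - |v| := by linarith
    refine ⟨0, w - (σ - σ'), ?_, ?_, ?_, ?_⟩ <;> rw [abs_lt] <;> push_cast <;>
      constructor <;> linarith

lemma stmt16_build (δ t σ a b w : ℝ) (hδ : 4 < δ) (ht0 : 0 ≤ t) (ht1 : t ≤ 1)
    (h1 : |w - (σ + (a - b))| < δ) (h2 : |w - (σ - (a - b))| < δ)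
    (h3 : |w - ((a + b) - σ)| < δ) (h4 : |w - (σ - (a + b))| < δ) :
    ∃ (k : ℤ) (w' : ℝ),
      |w' - ((1 - t) * σ + (a - b))| < δ ∧ |w' - ((1 - t) * σ - (a - b))| < δ ∧
      |w' - (((a - k) + (b - k)) - (1 - t) * σ)| < δ ∧
      |w' - ((1 - t) * σ - ((a - k) + (b - k)))| < δ := by
  rcases le_total 0 σ with hs | hs
  · obtain ⟨k, w', c1, c2, c3, c4⟩ := stmt16_key δ σ ((1 - t) * σ) (a + b) (a - b) w hδ
      (mul_nonneg (by linarith) hs) (by nlinarith) h1 h2 h3 h4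
    refine ⟨k, w', c1, c2, ?_, ?_⟩
    · rw [show ((a - (k:ℝ)) + (b - k)) - (1 - t) * σ = ((a + b) - 2 * k) - (1 - t) * σ by ring]
      exact c3
    · rw [show (1 - t) * σ - ((a - (k:ℝ)) + (b - k)) = (1 - t) * σ - ((a + b) - 2 * k) by ring]
      exact c4
  · obtain ⟨k, w', c1, c2, c3, c4⟩ := stmt16_key δ (-σ) ((1 - t) * (-σ)) (-(a + b)) (-(a - b))
      (-w) hδ (mul_nonneg (by linarith) (by linarith)) (by nlinarith)
      (by rw [show -w - (-σ + -(a - b)) = -(w - (σ + (a - b))) by ring, abs_neg]; exact h1)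
      (by rw [show -w - (-σ - -(a - b)) = -(w - (σ - (a - b))) by ring, abs_neg]; exact h2)
      (by rw [show -w - (-(a + b) - -σ) = -(w - ((a + b) - σ)) by ring, abs_neg]; exact h3)
      (by rw [show -w - (-σ - -(a + b)) = -(w - (σ - (a + b))) by ring, abs_neg]; exact h4)
    refine ⟨-k, -w', ?_, ?_, ?_, ?_⟩
    · rw [show -w' - ((1 - t) * σ + (a - b)) =
        -(w' - ((1 - t) * (-σ) + -(a - b))) by ring, abs_neg]
      exact c1
    · rw [show -w' - ((1 - t) * σ - (a - b)) =
        -(w' - ((1 - t) * (-σ) - -(a - b))) by ring, abs_neg]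
      exact c2
    · push_cast
      rw [show -w' - ((a - -(k:ℝ)) + (b - -(k:ℝ)) - (1 - t) * σ) =
        -(w' - ((-(a + b) - 2 * (k:ℝ)) - (1 - t) * (-σ))) by ring, abs_neg]
      exact c3
    · push_cast
      rw [show -w' - ((1 - t) * σ - ((a - -(k:ℝ)) + (b - -(k:ℝ)))) =
        -(w' - ((1 - t) * (-σ) - (-(a + b) - 2 * (k:ℝ)))) by ring, abs_neg]
      exact c4

lemma stmt16_dist4_lt {a b : PiLp ⊤ (fun _ : Fin 4 => ℝ)} {δ : ℝ}
    (h : ∀ l, |a l - b l| < δ) : dist a b < δ := by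
  obtain ⟨l0, hl0⟩ := Finite.exists_max (fun l : Fin 4 => dist (a l) (b l))
  calc dist a b = ⨆ l, dist (a l) (b l) := PiLp.dist_eq_iSup a b
    _ ≤ dist (a l0) (b l0) := ciSup_le hl0
    _ < δ := by rw [Real.dist_eq]; exact h l0

lemma stmt16_dist4_coord {a b : PiLp ⊤ (fun _ : Fin 4 => ℝ)} (l : Fin 4) :
    |a l - b l| ≤ dist a b := by
  rw [PiLp.dist_eq_iSup, ← Real.dist_eq]
  exact le_ciSup (f := fun l => dist (a l) (b l))
    (Set.Finite.bddAbove (Set.finite_range _)) l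

lemma stmt16_cont_coord (l : Fin 4) :
    Continuous fun q : PiLp ⊤ (fun _ : Fin 4 => ℝ) => q l :=
  (continuous_apply l).comp (PiLp.continuous_ofLp ⊤ _)

lemma stmt16_dist4_lt' {a b : PiLp ⊤ (fun _ : Fin 4 => ℝ)} {δ : ℝ}
    (h0 : |a 0 - b 0| < δ) (h1 : |a 1 - b 1| < δ)
    (h2 : |a 2 - b 2| < δ) (h3 : |a 3 - b 3| < δ) : dist a b < δ := by
  apply stmt16_dist4_lt
  intro l
  fin_cases l
  exacts [h0, h1, h2, h3]

lemma stmt16_hplane (G : Set (PiLp 1 (fun _ : Fin 3 => ℝ)))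
    (hG : G = {x : PiLp 1 (fun _ : Fin 3 => ℝ) |
      ∃ i j : Fin 3, i ≠ j ∧ (∃ m : ℤ, x i = (m : ℝ)) ∧ (∃ m : ℤ, x j = (m : ℝ))})
    (e : PiLp 1 (fun _ : Fin 3 => ℝ) → PiLp ⊤ (fun _ : Fin 4 => ℝ))
    (he : ∀ x : PiLp 1 (fun _ : Fin 3 => ℝ),
      e x = ![-x 0 + x 1 + x 2, x 0 - x 1 + x 2, x 0 + x 1 - x 2, x 0 + x 1 + x 2])
    (δ : ℝ) (hδ : 4 < δ)
    (q : PiLp ⊤ (fun _ : Fin 4 => ℝ)) (hq : q 3 = q 0 + q 1 + q 2) :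
    q ∈ Metric.thickening δ (e '' G) := by
  have ev30 : ∀ a b c : ℝ, (![a,b,c] : Fin 3 → ℝ) 0 = a := fun _ _ _ => rfl
  have ev31 : ∀ a b c : ℝ, (![a,b,c] : Fin 3 → ℝ) 1 = b := fun _ _ _ => rfl
  have ev32 : ∀ a b c : ℝ, (![a,b,c] : Fin 3 → ℝ) 2 = c := fun _ _ _ => rfl
  have ev40 : ∀ a b c d : ℝ, (![a,b,c,d] : Fin 4 → ℝ) 0 = a := fun _ _ _ _ => rfl
  have ev41 : ∀ a b c d : ℝ, (![a,b,c,d] : Fin 4 → ℝ) 1 = b := fun _ _ _ _ => rfl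
  have ev42 : ∀ a b c d : ℝ, (![a,b,c,d] : Fin 4 → ℝ) 2 = c := fun _ _ _ _ => rfl
  have ev43 : ∀ a b c d : ℝ, (![a,b,c,d] : Fin 4 → ℝ) 3 = d := fun _ _ _ _ => rfl
  have r0 := abs_le.1 (abs_sub_round ((q 3 - q 0) / 2))
  have r1 := abs_le.1 (abs_sub_round ((q 3 - q 1) / 2))
  refine Metric.mem_thickening_iff.2
    ⟨e (WithLp.toLp 1 ![((round ((q 3 - q 0) / 2) : ℤ) : ℝ), ((round ((q 3 - q 1) / 2) : ℤ) : ℝ),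
        (q 3 - q 2) / 2]), ⟨_, ?_, rfl⟩, ?_⟩
  · rw [hG]
    exact ⟨0, 1, by decide, ⟨round ((q 3 - q 0) / 2), rfl⟩, ⟨round ((q 3 - q 1) / 2), rfl⟩⟩
  · apply stmt16_dist4_lt' <;> rw [he] <;>
      simp only [PiLp.toLp_apply, ev40, ev41, ev42, ev43, ev30, ev31, ev32] <;>
      rw [abs_lt] <;> constructor <;> linarith [r0.1, r0.2, r1.1, r1.2]

example (v0 v1 v2 v3 : ℝ) : (![v0,v1,v2,v3] : Fin 4 → ℝ) 3 = v3 := rfl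
example (v0 v1 v2 v3 : ℝ) : (![v0,v1,v2,v3] : Fin 4 → ℝ) 2 = v2 := rfl

lemma stmt16_master (G : Set (PiLp 1 (fun _ : Fin 3 => ℝ)))
    (hG : G = {x : PiLp 1 (fun _ : Fin 3 => ℝ) |
      ∃ i j : Fin 3, i ≠ j ∧ (∃ m : ℤ, x i = (m : ℝ)) ∧ (∃ m : ℤ, x j = (m : ℝ))})
    (e : PiLp 1 (fun _ : Fin 3 => ℝ) → PiLp ⊤ (fun _ : Fin 4 => ℝ))
    (he : ∀ x : PiLp 1 (fun _ : Fin 3 => ℝ),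
      e x = ![-x 0 + x 1 + x 2, x 0 - x 1 + x 2, x 0 + x 1 - x 2, x 0 + x 1 + x 2])
    (δ : ℝ) (hδ : 4 < δ)
    (p : PiLp ⊤ (fun _ : Fin 4 => ℝ)) (hp : p ∈ Metric.thickening δ (e '' G))
    (t : ℝ) (ht0 : 0 ≤ t) (ht1 : t ≤ 1) :
    (WithLp.equiv ⊤ (Fin 4 → ℝ)).symm
        (fun l => p l + t * ((p 3 - p 0 - p 1 - p 2) / 2))
      ∈ Metric.thickening δ (e '' G) := by
  rw [Metric.mem_thickening_iff] at hp
  refine Metric.mem_thickening_iff.2 ?_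
  obtain ⟨_, ⟨y, hyG, rfl⟩, hpd⟩ := hp
  rw [hG] at hyG
  obtain ⟨i, j, hij, hyi, hyj⟩ := hyG
  have hd : ∀ l : Fin 4, |p l - e y l| < δ :=
    fun l => lt_of_le_of_lt (stmt16_dist4_coord l) hpd
  have hcase : ((∃ m : ℤ, y 0 = (m:ℝ)) ∧ (∃ m : ℤ, y 1 = (m:ℝ))) ∨
      ((∃ m : ℤ, y 0 = (m:ℝ)) ∧ (∃ m : ℤ, y 2 = (m:ℝ))) ∨
      ((∃ m : ℤ, y 1 = (m:ℝ)) ∧ (∃ m : ℤ, y 2 = (m:ℝ))) := by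
    fin_cases i <;> fin_cases j <;> simp_all <;> tauto
  clear hpd hij hyi hyj
  have ev3 : ∀ a b c : ℝ, (![a,b,c] : Fin 3 → ℝ) 0 = a ∧ (![a,b,c] : Fin 3 → ℝ) 1 = b ∧
      (![a,b,c] : Fin 3 → ℝ) 2 = c := fun _ _ _ => ⟨rfl, rfl, rfl⟩
  have ev4 : ∀ a b c d : ℝ, (![a,b,c,d] : Fin 4 → ℝ) 0 = a ∧ (![a,b,c,d] : Fin 4 → ℝ) 1 = b ∧
      (![a,b,c,d] : Fin 4 → ℝ) 2 = c ∧ (![a,b,c,d] : Fin 4 → ℝ) 3 = d :=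
    fun _ _ _ _ => ⟨rfl, rfl, rfl, rfl⟩
  have ev30 : ∀ a b c : ℝ, (![a,b,c] : Fin 3 → ℝ) 0 = a := fun a b c => (ev3 a b c).1
  have ev31 : ∀ a b c : ℝ, (![a,b,c] : Fin 3 → ℝ) 1 = b := fun a b c => (ev3 a b c).2.1
  have ev32 : ∀ a b c : ℝ, (![a,b,c] : Fin 3 → ℝ) 2 = c := fun a b c => (ev3 a b c).2.2
  have ev40 : ∀ a b c d : ℝ, (![a,b,c,d] : Fin 4 → ℝ) 0 = a := fun a b c d => (ev4 a b c d).1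
  have ev41 : ∀ a b c d : ℝ, (![a,b,c,d] : Fin 4 → ℝ) 1 = b := fun a b c d => (ev4 a b c d).2.1
  have ev42 : ∀ a b c d : ℝ, (![a,b,c,d] : Fin 4 → ℝ) 2 = c := fun a b c d => (ev4 a b c d).2.2.1
  have ev43 : ∀ a b c d : ℝ, (![a,b,c,d] : Fin 4 → ℝ) 3 = d := fun a b c d => (ev4 a b c d).2.2.2
  rcases hcase with ⟨⟨m, hm⟩, ⟨n, hn⟩⟩ | ⟨⟨m, hm⟩, ⟨n, hn⟩⟩ | ⟨⟨m, hm⟩, ⟨n, hn⟩⟩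
  · -- integers at coordinates 0, 1; free coordinate 2
    obtain ⟨k, w', c1, c2, c3, c4⟩ := stmt16_build δ t ((p 3 - p 0 - p 1 - p 2) / 2)
        ((p 3 - p 0) / 2 - m) ((p 3 - p 1) / 2 - n) ((p 3 - p 2) / 2 - y 2) hδ ht0 ht1
      (by have h0 := hd 0; rw [he] at h0; simp only [Matrix.cons_val_zero] at h0
          rw [hm, hn] at h0; convert h0 using 2; ring)
      (by have h0 := hd 1; rw [he] at h0
          simp only [Matrix.cons_val_one, Matrix.head_cons, Matrix.cons_val_zero] at h0
          rw [hm, hn] at h0; convert h0 using 2; ring)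
      (by have h0 := hd 2; rw [he] at h0
          simp only [show ∀ v0 v1 v2 v3 : ℝ, (![v0,v1,v2,v3] : Fin 4 → ℝ) 2 = v2
            from fun _ _ _ _ => rfl] at h0
          rw [hm, hn] at h0
          have h0' : |-(p 2 - ((m:ℝ) + n - y 2))| < δ := by rwa [abs_neg]
          convert h0' using 2; ring)
      (by have h0 := hd 3; rw [he] at h0
          simp only [show ∀ v0 v1 v2 v3 : ℝ, (![v0,v1,v2,v3] : Fin 4 → ℝ) 3 = v3
            from fun _ _ _ _ => rfl] at h0
          rw [hm, hn] at h0; convert h0 using 2; ring)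
    refine ⟨e (WithLp.toLp 1 ![((m + k : ℤ) : ℝ), ((n + k : ℤ) : ℝ), (p 3 - p 2) / 2 - w']),
      ⟨_, ?_, rfl⟩, ?_⟩
    · rw [hG]
      exact ⟨0, 1, by decide, ⟨m + k, by simp⟩, ⟨n + k, by simp⟩⟩
    · apply stmt16_dist4_lt' <;> rw [he] <;>
        simp only [WithLp.equiv_symm_apply, PiLp.toLp_apply, ev40, ev41, ev42, ev43, ev30, ev31, ev32]
      · convert c1 using 2; push_cast; ring
      · convert c2 using 2; push_cast; ring
      · have c3' : |-(w' - ((((p 3 - p 0) / 2 - m) - k) + (((p 3 - p 1) / 2 - n) - k)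
            - (1 - t) * ((p 3 - p 0 - p 1 - p 2) / 2)))| < δ := by rwa [abs_neg]
        convert c3' using 2; push_cast; ring
      · convert c4 using 2; push_cast; ring
  · -- integers at coordinates 0, 2; free coordinate 1
    obtain ⟨k, w', c1, c2, c3, c4⟩ := stmt16_build δ t ((p 3 - p 0 - p 1 - p 2) / 2)
        ((p 3 - p 0) / 2 - m) ((p 3 - p 2) / 2 - n) ((p 3 - p 1) / 2 - y 1) hδ ht0 ht1
      (by have h0 := hd 0; rw [he] at h0; simp only [ev40, ev30, ev31, ev32] at h0
          rw [hm, hn] at h0; convert h0 using 2; ring)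
      (by have h0 := hd 2; rw [he] at h0; simp only [ev42, ev30, ev31, ev32] at h0
          rw [hm, hn] at h0; convert h0 using 2; ring)
      (by have h0 := hd 1; rw [he] at h0; simp only [ev41, ev30, ev31, ev32] at h0
          rw [hm, hn] at h0
          have h0' : |-(p 1 - ((m:ℝ) - y 1 + n))| < δ := by rwa [abs_neg]
          convert h0' using 2; ring)
      (by have h0 := hd 3; rw [he] at h0; simp only [ev43, ev30, ev31, ev32] at h0
          rw [hm, hn] at h0; convert h0 using 2; ring)
    refine ⟨e (WithLp.toLp 1 ![((m + k : ℤ) : ℝ), (p 3 - p 1) / 2 - w', ((n + k : ℤ) : ℝ)]),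
      ⟨_, ?_, rfl⟩, ?_⟩
    · rw [hG]
      exact ⟨0, 2, by decide, ⟨m + k, rfl⟩, ⟨n + k, rfl⟩⟩
    · apply stmt16_dist4_lt' <;> rw [he] <;>
        simp only [WithLp.equiv_symm_apply, PiLp.toLp_apply, ev40, ev41, ev42, ev43, ev30, ev31, ev32]
      · convert c1 using 2; push_cast; ring
      · have c3' : |-(w' - ((((p 3 - p 0) / 2 - m) - k) + (((p 3 - p 2) / 2 - n) - k)
            - (1 - t) * ((p 3 - p 0 - p 1 - p 2) / 2)))| < δ := by rwa [abs_neg]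
        convert c3' using 2; push_cast; ring
      · convert c2 using 2; push_cast; ring
      · convert c4 using 2; push_cast; ring
  · -- integers at coordinates 1, 2; free coordinate 0
    obtain ⟨k, w', c1, c2, c3, c4⟩ := stmt16_build δ t ((p 3 - p 0 - p 1 - p 2) / 2)
        ((p 3 - p 1) / 2 - m) ((p 3 - p 2) / 2 - n) ((p 3 - p 0) / 2 - y 0) hδ ht0 ht1
      (by have h0 := hd 1; rw [he] at h0; simp only [ev41, ev30, ev31, ev32] at h0
          rw [hm, hn] at h0; convert h0 using 2; ring)
      (by have h0 := hd 2; rw [he] at h0; simp only [ev42, ev30, ev31, ev32] at h0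
          rw [hm, hn] at h0; convert h0 using 2; ring)
      (by have h0 := hd 0; rw [he] at h0; simp only [ev40, ev30, ev31, ev32] at h0
          rw [hm, hn] at h0
          have h0' : |-(p 0 - (-y 0 + (m:ℝ) + n))| < δ := by rwa [abs_neg]
          convert h0' using 2; ring)
      (by have h0 := hd 3; rw [he] at h0; simp only [ev43, ev30, ev31, ev32] at h0
          rw [hm, hn] at h0; convert h0 using 2; ring)
    refine ⟨e (WithLp.toLp 1 ![(p 3 - p 0) / 2 - w', ((m + k : ℤ) : ℝ), ((n + k : ℤ) : ℝ)]),
      ⟨_, ?_, rfl⟩, ?_⟩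
    · rw [hG]
      exact ⟨1, 2, by decide, ⟨m + k, rfl⟩, ⟨n + k, rfl⟩⟩
    · apply stmt16_dist4_lt' <;> rw [he] <;>
        simp only [WithLp.equiv_symm_apply, PiLp.toLp_apply, ev40, ev41, ev42, ev43, ev30, ev31, ev32]
      · have c3' : |-(w' - ((((p 3 - p 1) / 2 - m) - k) + (((p 3 - p 2) / 2 - n) - k)
            - (1 - t) * ((p 3 - p 0 - p 1 - p 2) / 2)))| < δ := by rwa [abs_neg]
        convert c3' using 2; push_cast; ring
      · convert c1 using 2; push_cast; ring
      · convert c2 using 2; push_cast; ring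
      · convert c4 using 2; push_cast; ring

/-- For every `r > 8`, the open `r/2`-neighborhood of `e(G(ℤ³))` in `(ℝ⁴, ℓ∞)` is
contractible, where `G(ℤ³)` is the lattice graph of `ℤ³`. -/
theorem stmt_16 (G : Set (PiLp 1 (fun _ : Fin 3 => ℝ)))
    (hG : G = {x : PiLp 1 (fun _ : Fin 3 => ℝ) |
      ∃ i j : Fin 3, i ≠ j ∧ (∃ m : ℤ, x i = (m : ℝ)) ∧ (∃ m : ℤ, x j = (m : ℝ))})
    (e : PiLp 1 (fun _ : Fin 3 => ℝ) → PiLp ⊤ (fun _ : Fin 4 => ℝ))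
    (he : ∀ x : PiLp 1 (fun _ : Fin 3 => ℝ),
      e x = ![-x 0 + x 1 + x 2, x 0 - x 1 + x 2, x 0 + x 1 - x 2, x 0 + x 1 + x 2]) :
    ∀ r : ℝ, r > 8 →
      ContractibleSpace (Metric.thickening (r / 2) (e '' G)) := by
  intro r hr
  have hδ : 4 < r / 2 := by linarith
  set δ := r / 2 with hδdef
  set T := Metric.thickening δ (e '' G) with hT
  have contc : ∀ l : Fin 4, Continuous fun q : T => (q : PiLp ⊤ (fun _ : Fin 4 => ℝ)) l :=
    fun l => ((continuous_apply l).comp (PiLp.continuous_ofLp ⊤ _)).comp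
      continuous_subtype_val
  have h0T : (WithLp.equiv ⊤ (Fin 4 → ℝ)).symm (fun _ => (0 : ℝ)) ∈ T := by
    refine stmt16_hplane G hG e he δ hδ _ ?_
    norm_num
  -- first homotopy: squash onto the hyperplane
  have cont1 : Continuous fun z : unitInterval × T =>
      ((WithLp.equiv ⊤ (Fin 4 → ℝ)).symm (fun l => (z.2 : PiLp ⊤ (fun _ : Fin 4 => ℝ)) l +
        (z.1 : ℝ) * (((z.2 : PiLp ⊤ (fun _ : Fin 4 => ℝ)) 3 -
          (z.2 : PiLp ⊤ (fun _ : Fin 4 => ℝ)) 0 - (z.2 : PiLp ⊤ (fun _ : Fin 4 => ℝ)) 1 -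
          (z.2 : PiLp ⊤ (fun _ : Fin 4 => ℝ)) 2) / 2))) := by
    refine (PiLp.continuous_toLp ⊤ (fun _ : Fin 4 => ℝ)).comp (continuous_pi fun l => ?_)
    have hc : ∀ l : Fin 4, Continuous fun z : unitInterval × T =>
        (z.2 : PiLp ⊤ (fun _ : Fin 4 => ℝ)) l := fun l => (contc l).comp continuous_snd
    exact ((hc l).add (((continuous_subtype_val.comp continuous_fst).mul
      ((((((hc 3).sub (hc 0)).sub (hc 1)).sub (hc 2))).div_const 2))))
  let F1 : C(unitInterval × T, T) :=
    ⟨fun z => ⟨_, stmt16_master G hG e he δ hδ _ z.2.2 (z.1 : ℝ) z.1.2.1 z.1.2.2⟩,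
      cont1.subtype_mk _⟩
  let ρ : C(T, T) := F1.comp ⟨fun q => ((1 : unitInterval), q), by continuity⟩
  have H1 : (ContinuousMap.id T).Homotopy ρ :=
    { toContinuousMap := F1
      map_zero_left := fun q => by
        apply Subtype.ext
        show (WithLp.equiv ⊤ (Fin 4 → ℝ)).symm _ = _
        apply PiLp.ext; intro l
        show (q : PiLp ⊤ (fun _ : Fin 4 => ℝ)) l + ((0 : unitInterval) : ℝ) * _ = _
        norm_num
      map_one_left := fun q => rfl }
  -- second homotopy: contract the hyperplane to the origin
  have cont2 : Continuous fun z : unitInterval × T =>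
      ((WithLp.equiv ⊤ (Fin 4 → ℝ)).symm (fun l =>
        (1 - (z.1 : ℝ)) * ((z.2 : PiLp ⊤ (fun _ : Fin 4 => ℝ)) l +
        ((z.2 : PiLp ⊤ (fun _ : Fin 4 => ℝ)) 3 -
          (z.2 : PiLp ⊤ (fun _ : Fin 4 => ℝ)) 0 - (z.2 : PiLp ⊤ (fun _ : Fin 4 => ℝ)) 1 -
          (z.2 : PiLp ⊤ (fun _ : Fin 4 => ℝ)) 2) / 2))) := by
    refine (PiLp.continuous_toLp ⊤ (fun _ : Fin 4 => ℝ)).comp (continuous_pi fun l => ?_)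
    have hc : ∀ l : Fin 4, Continuous fun z : unitInterval × T =>
        (z.2 : PiLp ⊤ (fun _ : Fin 4 => ℝ)) l := fun l => (contc l).comp continuous_snd
    exact ((continuous_const.sub (continuous_subtype_val.comp continuous_fst)).mul
      ((hc l).add (((((hc 3).sub (hc 0)).sub (hc 1)).sub (hc 2)).div_const 2)))
  have memH : ∀ z : unitInterval × T,
      ((WithLp.equiv ⊤ (Fin 4 → ℝ)).symm (fun l =>
        (1 - (z.1 : ℝ)) * ((z.2 : PiLp ⊤ (fun _ : Fin 4 => ℝ)) l +
        ((z.2 : PiLp ⊤ (fun _ : Fin 4 => ℝ)) 3 -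
          (z.2 : PiLp ⊤ (fun _ : Fin 4 => ℝ)) 0 - (z.2 : PiLp ⊤ (fun _ : Fin 4 => ℝ)) 1 -
          (z.2 : PiLp ⊤ (fun _ : Fin 4 => ℝ)) 2) / 2))) ∈ T := by
    intro z
    refine stmt16_hplane G hG e he δ hδ _ ?_
    show (1 - (z.1 : ℝ)) * _ = (1 - (z.1 : ℝ)) * _ + (1 - (z.1 : ℝ)) * _ + (1 - (z.1 : ℝ)) * _
    ring
  have H2 : ρ.Homotopy (ContinuousMap.const T ⟨_, h0T⟩) :=
    { toContinuousMap := ⟨fun z => ⟨_, memH z⟩, cont2.subtype_mk _⟩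
      map_zero_left := fun q => by
        apply Subtype.ext
        apply PiLp.ext; intro l
        show (1 - ((0 : unitInterval) : ℝ)) * _ = (q : PiLp ⊤ (fun _ : Fin 4 => ℝ)) l +
          ((1 : unitInterval) : ℝ) * _
        norm_num
      map_one_left := fun q => by
        apply Subtype.ext
        apply PiLp.ext; intro l
        show (1 - ((1 : unitInterval) : ℝ)) * _ = (0 : ℝ)
        norm_num }
  rw [contractible_iff_id_nullhomotopic]
  exact ⟨⟨_, h0T⟩, ⟨H1.trans H2⟩⟩
end
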